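/- arXiv:2501.19119 — 3 statements merged into one kernel-verified Lean document; each statement's English description precedes it below -/
import Mathlib

section
/- Let n ≥ 1 be an integer, R > 0, m > 1, μ > 0, T₀ > 0, and fix an admissible approximate family with limit (w₀, w) on [0,Rⁿ]×[0,T₀]. Let r₁ ∈ (0,R) and let u₀ : [0,R] → [0,∞) be bounded and measurable with n∫₀^R ρ^{n−1}u₀(ρ)dρ = μRⁿ, with u₀(ρ) = 0 for a.e. ρ ∈ (r₁,R), and such that w₀ is the mass accumulation function of u₀. Set A_crit := (μ(Rⁿ − r₁ⁿ)(m−1)/(n r₁^{n−1}))^{1/(m−1)}. If there exist A > A_crit and r₀ ∈ (0,r₁) such that u₀(ρ) ≥ A(r₁−ρ)^{1/(m−1)} for a.e. ρ ∈ (r₀,r₁), then there exist T ∈ (0,T₀), θ > 0 and r⋆ ∈ (0,r₁) such that for almost every t ∈ (0,T) one has w(s,t) < μRⁿ for every s ∈ (r⋆ⁿ, r₁ⁿ + θt). (This is the support-expansion part of the paper's main theorem, expressed for the mass accumulation function.) -/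
open Set MeasureTheory Filter

/-- The parabolic operator `P_ε` acting on a function `w = w(s,t)`:
`(P_ε w)(s,t) = ∂_t w − n² s^{2−2/n} (∂_s w + ε)^{m−1} ∂_{ss} w − w ∂_s w + μ s ∂_s w`. -/
noncomputable def Peps (n : ℕ) (m μ ε : ℝ) (w : ℝ → ℝ → ℝ) (s t : ℝ) : ℝ :=
  deriv (fun τ => w s τ) t
    - (n : ℝ) ^ 2 * s ^ ((2 : ℝ) - 2 / (n : ℝ))
      * (deriv (fun σ => w σ t) s + ε) ^ (m - 1)
      * deriv (deriv (fun σ => w σ t)) s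
    - w s t * deriv (fun σ => w σ t) s
    + μ * s * deriv (fun σ => w σ t) s

/-- The mass accumulation function of `u₀`: `w₀(s) = n ∫₀^{s^{1/n}} ρ^{n−1} u₀(ρ) dρ`. -/
noncomputable def massAccum (n : ℕ) (u₀ : ℝ → ℝ) (s : ℝ) : ℝ :=
  (n : ℝ) * ∫ ρ in (0:ℝ)..(s ^ ((n : ℝ)⁻¹)), ρ ^ (n - 1) * u₀ ρ

/-- The critical constant `C_crit(r₁)` from the paper. -/
noncomputable def Ccrit (n : ℕ) (R m μ r₁ : ℝ) : ℝ :=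
  (m - 1) / m * (μ * (R ^ n - r₁ ^ n) * (m - 1) / (r₁ ^ (2 * n - 2) * (n : ℝ) ^ 2)) ^ (1 / (m - 1))

/-- An admissible approximate family with limit `(w₀, w)` on `[0,Rⁿ] × [0,T₀]`. -/
structure ApproxFamily (n : ℕ) (R m μ T₀ : ℝ) (w₀ : ℝ → ℝ) (w : ℝ → ℝ → ℝ) where
  weps : ℝ → ℝ → ℝ → ℝ
  epsSeq : ℕ → ℝ
  w₀_contOn : ContinuousOn w₀ (Icc 0 (R ^ n))
  w₀_mono : MonotoneOn w₀ (Icc 0 (R ^ n))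
  w₀_zero : w₀ 0 = 0
  w₀_top : w₀ (R ^ n) = μ * R ^ n
  weps_cont : ∀ ε ∈ Ioo (0:ℝ) 1,
    ContinuousOn (fun p : ℝ × ℝ => weps ε p.1 p.2) (Icc 0 (R ^ n) ×ˢ Icc 0 T₀)
  weps_diff_t : ∀ ε ∈ Ioo (0:ℝ) 1, ∀ s ∈ Icc (0:ℝ) (R ^ n), ∀ t ∈ Ioo (0:ℝ) T₀,
    DifferentiableAt ℝ (fun τ => weps ε s τ) t
  weps_diff_s : ∀ ε ∈ Ioo (0:ℝ) 1, ∀ s ∈ Icc (0:ℝ) (R ^ n), ∀ t ∈ Ioo (0:ℝ) T₀,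
    DifferentiableAt ℝ (fun σ => weps ε σ t) s
  weps_diff_ss : ∀ ε ∈ Ioo (0:ℝ) 1, ∀ s ∈ Icc (0:ℝ) (R ^ n), ∀ t ∈ Ioo (0:ℝ) T₀,
    DifferentiableAt ℝ (deriv (fun σ => weps ε σ t)) s
  weps_dt_cont : ∀ ε ∈ Ioo (0:ℝ) 1,
    ContinuousOn (fun p : ℝ × ℝ => deriv (fun τ => weps ε p.1 τ) p.2)
      (Icc 0 (R ^ n) ×ˢ Ioo 0 T₀)
  weps_ds_cont : ∀ ε ∈ Ioo (0:ℝ) 1,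
    ContinuousOn (fun p : ℝ × ℝ => deriv (fun σ => weps ε σ p.2) p.1)
      (Icc 0 (R ^ n) ×ˢ Ioo 0 T₀)
  weps_dss_cont : ∀ ε ∈ Ioo (0:ℝ) 1,
    ContinuousOn (fun p : ℝ × ℝ => deriv (deriv (fun σ => weps ε σ p.2)) p.1)
      (Icc 0 (R ^ n) ×ˢ Ioo 0 T₀)
  weps_pde : ∀ ε ∈ Ioo (0:ℝ) 1, ∀ s ∈ Icc (0:ℝ) (R ^ n), ∀ t ∈ Ioo (0:ℝ) T₀,
    Peps n m μ ε (weps ε) s t = 0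
  weps_bc0 : ∀ ε ∈ Ioo (0:ℝ) 1, ∀ t ∈ Icc (0:ℝ) T₀, weps ε 0 t = 0
  weps_bcR : ∀ ε ∈ Ioo (0:ℝ) 1, ∀ t ∈ Icc (0:ℝ) T₀, weps ε (R ^ n) t = μ * R ^ n
  weps_ds_pos : ∀ ε ∈ Ioo (0:ℝ) 1, ∀ s ∈ Icc (0:ℝ) (R ^ n), ∀ t ∈ Ioo (0:ℝ) T₀,
    0 < deriv (fun σ => weps ε σ t) s
  weps_init : ∀ ε ∈ Ioo (0:ℝ) 1, ∀ s ∈ Icc (0:ℝ) (R ^ n), weps ε s 0 = w₀ s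
  weps_unif_init : ∀ s ∈ Ioo (0:ℝ) (R ^ n), ∀ δ > (0:ℝ), ∃ t₀ ∈ Ioo (0:ℝ) T₀,
    ∀ t ∈ Ioo (0:ℝ) t₀, ∀ ε ∈ Ioo (0:ℝ) 1, |weps ε s t - w₀ s| ≤ δ
  epsSeq_mem : ∀ j, epsSeq j ∈ Ioo (0:ℝ) 1
  epsSeq_lim : Tendsto epsSeq atTop (nhds 0)
  weps_conv : ∀ᵐ t ∂(volume.restrict (Icc 0 T₀)),
    ∀ s ∈ Icc (0:ℝ) (R ^ n),
      Tendsto (fun j => weps (epsSeq j) s t) atTop (nhds (w s t))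


lemma pow_sub_pow_le_aux {a c : ℝ} (n : ℕ) (h0 : 0 ≤ c) (hca : c ≤ a) :
    a ^ n - c ^ n ≤ n * a ^ (n - 1) * (a - c) := by
  have key := geom_sum₂_mul a c n
  rw [← key]
  have ha0 : 0 ≤ a := h0.trans hca
  have hsum : (∑ i ∈ Finset.range n, a ^ i * c ^ (n - 1 - i)) ≤ (n : ℝ) * a ^ (n - 1) := by
    calc (∑ i ∈ Finset.range n, a ^ i * c ^ (n - 1 - i))
        ≤ ∑ _i ∈ Finset.range n, a ^ (n - 1) := by
          apply Finset.sum_le_sum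
          intro i hi
          have hi' : i < n := Finset.mem_range.mp hi
          calc a ^ i * c ^ (n - 1 - i) ≤ a ^ i * a ^ (n - 1 - i) :=
                mul_le_mul_of_nonneg_left (pow_le_pow_left₀ h0 hca _) (pow_nonneg ha0 _)
            _ = a ^ (i + (n - 1 - i)) := (pow_add a i _).symm
            _ = a ^ (n - 1) := by congr 1; omega
      _ = (n : ℝ) * a ^ (n - 1) := by
          rw [Finset.sum_const, Finset.card_range, nsmul_eq_mul]
  have hac : 0 ≤ a - c := sub_nonneg.mpr hca
  exact mul_le_mul_of_nonneg_right hsum hac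

lemma deriv_nonpos_of_left_ge {g : ℝ → ℝ} {t₀ : ℝ} (ht₀ : 0 < t₀)
    (hg : DifferentiableAt ℝ g t₀) (hge : ∀ t ∈ Ico (0:ℝ) t₀, g t₀ ≤ g t) :
    deriv g t₀ ≤ 0 := by
  have h := hg.hasDerivAt
  rw [hasDerivAt_iff_tendsto_slope] at h
  have h' : Tendsto (slope g t₀) (nhdsWithin t₀ (Iio t₀)) (nhds (deriv g t₀)) :=
    h.mono_left (nhdsWithin_mono _ (fun y hy => ne_of_lt hy))
  have hev : ∀ᶠ y in nhdsWithin t₀ (Iio t₀), slope g t₀ y ≤ 0 := by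
    have hIoi : Ioi (0:ℝ) ∈ nhdsWithin t₀ (Iio t₀) :=
      mem_nhdsWithin_of_mem_nhds (Ioi_mem_nhds ht₀)
    filter_upwards [hIoi, self_mem_nhdsWithin] with y hy0 hyt
    have hnum : 0 ≤ g y - g t₀ := sub_nonneg.mpr (hge y ⟨le_of_lt hy0, hyt⟩)
    have hden : y - t₀ ≤ 0 := sub_nonpos.mpr (le_of_lt hyt)
    rw [slope_def_field]
    exact div_nonpos_of_nonneg_of_nonpos hnum hden
  exact le_of_tendsto h' hev

lemma deriv2_nonneg_of_interior_min {g : ℝ → ℝ} {a b x : ℝ} (hx : x ∈ Ioo a b)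
    (hmin : ∀ y ∈ Icc a b, g x ≤ g y)
    (hg : ∀ y ∈ Ioo a b, DifferentiableAt ℝ g y)
    (hg2 : DifferentiableAt ℝ (deriv g) x) :
    0 ≤ deriv (deriv g) x := by
  by_contra hneg
  push_neg at hneg
  have hlm : IsLocalMin g x :=
    Filter.eventually_of_mem (Icc_mem_nhds hx.1 hx.2) (fun y hy => hmin y hy)
  have hdz : deriv g x = 0 := hlm.deriv_eq_zero
  have h := hg2.hasDerivAt
  rw [hasDerivAt_iff_tendsto_slope] at h
  have h' : Tendsto (slope (deriv g) x) (nhdsWithin x (Ioi x)) (nhds (deriv (deriv g) x)) :=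
    h.mono_left (nhdsWithin_mono _ (fun y hy => ne_of_gt hy))
  have hev : ∀ᶠ y in nhdsWithin x (Ioi x), deriv g y < 0 ∧ y < b := by
    have h1 : ∀ᶠ y in nhdsWithin x (Ioi x), slope (deriv g) x y < 0 :=
      h'.eventually_lt_const hneg
    have h2 : Iio b ∈ nhdsWithin x (Ioi x) :=
      mem_nhdsWithin_of_mem_nhds (Iio_mem_nhds hx.2)
    filter_upwards [h1, h2, self_mem_nhdsWithin] with y hs hyb hyx
    refine ⟨?_, hyb⟩
    rw [slope_def_field, hdz, sub_zero] at hs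
    have hyx' : 0 < y - x := sub_pos.mpr hyx
    by_contra hge
    push_neg at hge
    exact absurd hs (not_lt.mpr (div_nonneg hge hyx'.le))
  obtain ⟨u, hu, hsub⟩ := mem_nhdsGT_iff_exists_Ioo_subset.mp hev
  set y := (x + u) / 2 with hy
  have hxy : x < y := by simp [hy]; linarith [mem_Ioi.mp hu]
  have hyu : y < u := by simp [hy]; linarith [mem_Ioi.mp hu]
  have hyprop := hsub ⟨hxy, hyu⟩
  have hyb : y < b := hyprop.2
  have hIccsub : Icc x y ⊆ Ioo a b := fun z hz => ⟨lt_of_lt_of_le hx.1 hz.1, lt_of_le_of_lt hz.2 hyb⟩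
  have hIoosub : Ioo x y ⊆ Ioo a b := fun z hz => hIccsub ⟨hz.1.le, hz.2.le⟩
  obtain ⟨ξ, hξ, hslope⟩ := exists_deriv_eq_slope g hxy
    (fun z hz => (hg z (hIccsub hz)).continuousAt.continuousWithinAt)
    (fun z hz => (hg z (hIoosub hz)).differentiableWithinAt)
  have hξneg : deriv g ξ < 0 := (hsub ⟨hξ.1, lt_trans hξ.2 hyu⟩).1
  rw [hslope] at hξneg
  have : g y - g x < 0 := by
    have := mul_neg_of_neg_of_pos hξneg (sub_pos.mpr hxy)
    rw [div_mul_cancel₀] at this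
    · exact this
    · exact ne_of_gt (sub_pos.mpr hxy)
  have := hmin y ⟨(le_of_lt (lt_trans hx.1 hxy)), hyb.le⟩
  linarith

lemma hasDerivAt_rpow_aff (a b e : ℝ) (y : ℝ) (h : a + b * y ≠ 0) :
    HasDerivAt (fun z => (a + b * z) ^ e) (e * (a + b * y) ^ (e - 1) * b) y := by
  have h1 : HasDerivAt (fun z : ℝ => a + b * z) b y := by
    simpa using ((hasDerivAt_id y).const_mul b).const_add a
  exact (Real.hasDerivAt_rpow_const (p := e) (Or.inl h)).comp y h1

lemma continuous_maxrpow {e : ℝ} (he : 0 < e) : Continuous (fun y : ℝ => (max y 0) ^ e) := by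
  rw [continuous_iff_continuousAt]
  intro y
  exact (Real.continuousAt_rpow_const _ _ (Or.inr he.le)).comp
    ((continuous_id.max continuous_const).continuousAt)


lemma massAccum_bound
    (n : ℕ) (hn : 1 ≤ n) (R m μ : ℝ) (hR : 0 < R) (hm : 1 < m)
    (r₁ : ℝ) (hr₁ : r₁ ∈ Ioo 0 R)
    (u₀ : ℝ → ℝ) (hu₀_meas : Measurable u₀)
    (hu₀_bdd : ∃ M, ∀ ρ ∈ Icc (0:ℝ) R, u₀ ρ ≤ M)
    (hu₀_nonneg : ∀ ρ ∈ Icc (0:ℝ) R, 0 ≤ u₀ ρ)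
    (hu₀_mass : (n : ℝ) * ∫ ρ in (0:ℝ)..R, ρ ^ (n - 1) * u₀ ρ = μ * R ^ n)
    (A : ℝ) (hA0 : 0 < A) (r₀ : ℝ) (hr₀ : r₀ ∈ Ioo 0 r₁)
    (hsteep : ∀ᵐ ρ ∂volume, ρ ∈ Ioo r₀ r₁ → A * (r₁ - ρ) ^ (1 / (m - 1)) ≤ u₀ ρ)
    (b : ℝ) (hb : b ∈ Ioo r₀ r₁)
    (s : ℝ) (hs : s ∈ Icc (b ^ n) (r₁ ^ n)) :
    (n : ℝ) * b ^ (n - 1) * A / (m / (m - 1))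
        * ((r₁ ^ n - s) / ((n : ℝ) * r₁ ^ (n - 1))) ^ (m / (m - 1))
      ≤ μ * R ^ n - massAccum n u₀ s := by
  have hm1 : (0:ℝ) < m - 1 := by linarith
  set p : ℝ := 1 / (m - 1) with hp_def
  have hp : 0 < p := by positivity
  have hβ : p + 1 = m / (m - 1) := by rw [hp_def]; field_simp; ring
  have hn0 : n ≠ 0 := by omega
  have hr₁0 : 0 < r₁ := hr₁.1
  have hb0 : 0 < b := lt_trans hr₀.1 hb.1
  have hs0 : (0:ℝ) ≤ s := le_trans (pow_nonneg hb0.le n) hs.1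
  set σ : ℝ := s ^ ((n : ℝ)⁻¹) with hσ_def
  have hσpow : σ ^ n = s := Real.rpow_inv_natCast_pow hs0 hn0
  have hσb : b ≤ σ := by
    have := Real.rpow_le_rpow (pow_nonneg hb0.le n) hs.1 (by positivity : (0:ℝ) ≤ (n:ℝ)⁻¹)
    rwa [Real.pow_rpow_inv_natCast hb0.le hn0] at this
  have hσr₁ : σ ≤ r₁ := by
    have := Real.rpow_le_rpow hs0 hs.2 (by positivity : (0:ℝ) ≤ (n:ℝ)⁻¹)
    rwa [Real.pow_rpow_inv_natCast hr₁0.le hn0] at this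
  have hσ0 : 0 < σ := lt_of_lt_of_le hb0 hσb
  have hσR : σ ≤ R := le_trans hσr₁ hr₁.2.le
  -- integrability
  obtain ⟨M, hM⟩ := hu₀_bdd
  have hM0 : 0 ≤ M := le_trans (hu₀_nonneg 0 ⟨le_refl 0, hR.le⟩) (hM 0 ⟨le_refl 0, hR.le⟩)
  have hint : ∀ a' b' : ℝ, a' ∈ Icc (0:ℝ) R → b' ∈ Icc (0:ℝ) R →
      IntervalIntegrable (fun ρ => ρ ^ (n - 1) * u₀ ρ) volume a' b' := by
    intro a' b' ha' hb'
    apply IntervalIntegrable.mono_fun' (g := fun _ => R ^ (n - 1) * M)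
      intervalIntegrable_const
      ((measurable_id.pow_const (n - 1)).mul hu₀_meas).aestronglyMeasurable
    rw [Filter.EventuallyLE, ae_restrict_iff' measurableSet_uIoc]
    apply ae_of_all
    intro ρ hρ
    have hρ' : ρ ∈ Icc (0:ℝ) R := by
      rcases hρ with ⟨h1, h2⟩
      constructor
      · exact le_trans (le_min ha'.1 hb'.1) (le_of_lt h1)
      · exact le_trans h2 (max_le ha'.2 hb'.2)
    have h1 : 0 ≤ ρ ^ (n - 1) * u₀ ρ :=
      mul_nonneg (pow_nonneg hρ'.1 _) (hu₀_nonneg ρ hρ')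
    have h2 : ρ ^ (n - 1) * u₀ ρ ≤ R ^ (n - 1) * M :=
      mul_le_mul (pow_le_pow_left₀ hρ'.1 hρ'.2 _) (hM ρ hρ') (hu₀_nonneg ρ hρ')
        (pow_nonneg hR.le _)
    simp only [id_eq, Real.norm_eq_abs, Pi.mul_apply]
    rwa [abs_of_nonneg h1]
  have h0R : (0:ℝ) ∈ Icc (0:ℝ) R := ⟨le_refl 0, hR.le⟩
  have hσmem : σ ∈ Icc (0:ℝ) R := ⟨hσ0.le, hσR⟩
  have hr₁mem : r₁ ∈ Icc (0:ℝ) R := ⟨hr₁0.le, hr₁.2.le⟩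
  have hRmem : R ∈ Icc (0:ℝ) R := ⟨hR.le, le_refl R⟩
  -- split the mass integral
  have hsplit : (∫ ρ in (0:ℝ)..σ, ρ ^ (n - 1) * u₀ ρ) + (∫ ρ in σ..R, ρ ^ (n - 1) * u₀ ρ)
      = ∫ ρ in (0:ℝ)..R, ρ ^ (n - 1) * u₀ ρ :=
    intervalIntegral.integral_add_adjacent_intervals (hint 0 σ h0R hσmem) (hint σ R hσmem hRmem)
  have hdiff : μ * R ^ n - massAccum n u₀ s = (n : ℝ) * ∫ ρ in σ..R, ρ ^ (n - 1) * u₀ ρ := by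
    rw [← hu₀_mass, massAccum, ← hσ_def, ← hsplit]; ring
  -- drop the part beyond r₁
  have hsplit2 : (∫ ρ in σ..r₁, ρ ^ (n - 1) * u₀ ρ) + (∫ ρ in r₁..R, ρ ^ (n - 1) * u₀ ρ)
      = ∫ ρ in σ..R, ρ ^ (n - 1) * u₀ ρ :=
    intervalIntegral.integral_add_adjacent_intervals (hint σ r₁ hσmem hr₁mem) (hint r₁ R hr₁mem hRmem)
  have htail : 0 ≤ ∫ ρ in r₁..R, ρ ^ (n - 1) * u₀ ρ := by
    apply intervalIntegral.integral_nonneg hr₁.2.le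
    intro ρ hρ
    have hρ' : ρ ∈ Icc (0:ℝ) R := ⟨le_trans hr₁0.le hρ.1, hρ.2⟩
    exact mul_nonneg (pow_nonneg hρ'.1 _) (hu₀_nonneg ρ hρ')
  -- compare with the steepness lower bound
  have hgcont : Continuous (fun ρ : ℝ => ρ ^ (n - 1) * (A * (r₁ - ρ) ^ p)) := by
    apply Continuous.mul (continuous_pow _)
    apply Continuous.mul continuous_const
    rw [continuous_iff_continuousAt]
    intro ρ
    exact (Real.continuousAt_rpow_const _ _ (Or.inr hp.le)).comp
      ((continuous_const.sub continuous_id).continuousAt)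
  have hgint : IntervalIntegrable (fun ρ : ℝ => ρ ^ (n - 1) * (A * (r₁ - ρ) ^ p)) volume σ r₁ :=
    hgcont.intervalIntegrable σ r₁
  have hmono : (∫ ρ in σ..r₁, ρ ^ (n - 1) * (A * (r₁ - ρ) ^ p))
      ≤ ∫ ρ in σ..r₁, ρ ^ (n - 1) * u₀ ρ := by
    apply intervalIntegral.integral_mono_ae_restrict hσr₁ hgint (hint σ r₁ hσmem hr₁mem)
    have h1 : ∀ᵐ ρ ∂(volume.restrict (Icc σ r₁)), ρ ∈ Ioo r₀ r₁ → A * (r₁ - ρ) ^ p ≤ u₀ ρ :=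
      ae_restrict_of_ae hsteep
    have h2 : ∀ᵐ ρ ∂(volume.restrict (Icc σ r₁)), ρ ∈ Icc σ r₁ :=
      ae_restrict_mem measurableSet_Icc
    filter_upwards [h1, h2] with ρ hρ1 hρ2
    have hρ0 : 0 ≤ ρ := le_trans hσ0.le hρ2.1
    by_cases hcase : ρ < r₁
    · have : A * (r₁ - ρ) ^ p ≤ u₀ ρ :=
        hρ1 ⟨lt_of_lt_of_le hb.1 (le_trans hσb hρ2.1), hcase⟩
      exact mul_le_mul_of_nonneg_left this (pow_nonneg hρ0 _)
    · have hρr₁ : ρ = r₁ := le_antisymm hρ2.2 (not_lt.mp hcase)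
      have : (r₁ - ρ) ^ p = 0 := by
        rw [hρr₁, sub_self]; exact Real.zero_rpow (ne_of_gt hp)
      rw [this, mul_zero, mul_zero]
      apply mul_nonneg (pow_nonneg hρ0 _)
      exact hu₀_nonneg ρ ⟨hρ0, le_trans hρ2.2 hr₁.2.le⟩
  have hmono2 : (∫ ρ in σ..r₁, (b ^ (n - 1) * A) * (r₁ - ρ) ^ p)
      ≤ ∫ ρ in σ..r₁, ρ ^ (n - 1) * (A * (r₁ - ρ) ^ p) := by
    apply intervalIntegral.integral_mono_on hσr₁
    · exact (Continuous.mul continuous_const (by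
        rw [continuous_iff_continuousAt]
        intro ρ
        exact (Real.continuousAt_rpow_const _ _ (Or.inr hp.le)).comp
          ((continuous_const.sub continuous_id).continuousAt))).intervalIntegrable σ r₁
    · exact hgint
    · intro ρ hρ
      have hbρ : b ≤ ρ := le_trans hσb hρ.1
      have h1 : b ^ (n - 1) ≤ ρ ^ (n - 1) := pow_le_pow_left₀ hb0.le hbρ _
      have h2 : 0 ≤ (r₁ - ρ) ^ p := Real.rpow_nonneg (by linarith [hρ.2] : (0:ℝ) ≤ r₁ - ρ) _
      calc b ^ (n - 1) * A * (r₁ - ρ) ^ p = b ^ (n - 1) * (A * (r₁ - ρ) ^ p) := by ring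
        _ ≤ ρ ^ (n - 1) * (A * (r₁ - ρ) ^ p) :=
            mul_le_mul_of_nonneg_right h1 (mul_nonneg hA0.le h2)
  have hcomp : (∫ ρ in σ..r₁, (r₁ - ρ) ^ p) = (r₁ - σ) ^ (p + 1) / (p + 1) := by
    have := intervalIntegral.integral_comp_sub_left (a := σ) (b := r₁) (fun y : ℝ => y ^ p) r₁
    rw [this, sub_self]
    rw [integral_rpow (Or.inl (by linarith : (-1:ℝ) < p))]
    rw [Real.zero_rpow (by positivity : p + 1 ≠ 0), sub_zero]
  have hconstmul : (∫ ρ in σ..r₁, (b ^ (n - 1) * A) * (r₁ - ρ) ^ p)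
      = (b ^ (n - 1) * A) * ((r₁ - σ) ^ (p + 1) / (p + 1)) := by
    rw [intervalIntegral.integral_const_mul, hcomp]
  -- lower bound for (r₁ - σ)
  have hD : (0:ℝ) < (n : ℝ) * r₁ ^ (n - 1) := by positivity
  have hqs : r₁ ^ n - s ≤ ((n : ℝ) * r₁ ^ (n - 1)) * (r₁ - σ) := by
    have := pow_sub_pow_le_aux (a := r₁) (c := σ) n hσ0.le hσr₁
    rw [hσpow] at this; linarith
  have hrpow : ((r₁ ^ n - s) / ((n : ℝ) * r₁ ^ (n - 1))) ^ (p + 1) ≤ (r₁ - σ) ^ (p + 1) := by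
    apply Real.rpow_le_rpow
    · apply div_nonneg _ hD.le; linarith [hs.2]
    · rw [div_le_iff₀ hD]; linarith
    · positivity
  -- put everything together
  rw [hdiff, ← hβ]
  have hchain : (b ^ (n - 1) * A) * ((r₁ - σ) ^ (p + 1) / (p + 1))
      ≤ ∫ ρ in σ..R, ρ ^ (n - 1) * u₀ ρ := by
    rw [← hsplit2, ← hconstmul]
    have := le_trans hmono2 hmono
    linarith
  have hfinal : (n : ℝ) * b ^ (n - 1) * A / (p + 1)
      * ((r₁ ^ n - s) / ((n : ℝ) * r₁ ^ (n - 1))) ^ (p + 1)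
      ≤ (n : ℝ) * ((b ^ (n - 1) * A) * ((r₁ - σ) ^ (p + 1) / (p + 1))) := by
    have hnb : (0:ℝ) ≤ (n : ℝ) * b ^ (n - 1) * A / (p + 1) := by positivity
    calc (n : ℝ) * b ^ (n - 1) * A / (p + 1)
          * ((r₁ ^ n - s) / ((n : ℝ) * r₁ ^ (n - 1))) ^ (p + 1)
        ≤ (n : ℝ) * b ^ (n - 1) * A / (p + 1) * (r₁ - σ) ^ (p + 1) :=
          mul_le_mul_of_nonneg_left hrpow hnb
      _ = (n : ℝ) * ((b ^ (n - 1) * A) * ((r₁ - σ) ^ (p + 1) / (p + 1))) := by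
          field_simp
    
  calc (n : ℝ) * b ^ (n - 1) * A / (p + 1)
        * ((r₁ ^ n - s) / ((n : ℝ) * r₁ ^ (n - 1))) ^ (p + 1)
      ≤ (n : ℝ) * ((b ^ (n - 1) * A) * ((r₁ - σ) ^ (p + 1) / (p + 1))) := hfinal
    _ ≤ (n : ℝ) * ∫ ρ in σ..R, ρ ^ (n - 1) * u₀ ρ := by
        apply mul_le_mul_of_nonneg_left hchain (by positivity)

set_option maxHeartbeats 1000000 in
lemma comparison_principle
    (n : ℕ) (hn : 1 ≤ n) (m μ ε : ℝ) (hm : 1 < m) (hε : 0 < ε) (hμ : 0 < μ)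
    (SR q s₀ θ c T T₀ : ℝ)
    (hT : 0 < T) (hTT₀ : T < T₀)
    (hs₀ : 0 < s₀) (hs₀q : s₀ < q) (hqT : q + θ * T ≤ SR)
    (hθ : 0 < θ) (hc : 0 < c)
    (W : ℝ → ℝ → ℝ)
    (hWcont : ContinuousOn (fun pt : ℝ × ℝ => W pt.1 pt.2) (Icc s₀ SR ×ˢ Icc 0 T))
    (hWdt : ∀ s ∈ Icc s₀ SR, ∀ t ∈ Ioo 0 T₀, DifferentiableAt ℝ (fun τ => W s τ) t)
    (hWds : ∀ s ∈ Icc s₀ SR, ∀ t ∈ Ioo 0 T₀, DifferentiableAt ℝ (fun σ => W σ t) s)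
    (hWdss : ∀ s ∈ Icc s₀ SR, ∀ t ∈ Ioo 0 T₀, DifferentiableAt ℝ (deriv (fun σ => W σ t)) s)
    (hWpde : ∀ s ∈ Icc s₀ SR, ∀ t ∈ Ioo 0 T₀, Peps n m μ ε W s t = 0)
    (hWK : ∀ s ∈ Icc s₀ SR, ∀ t ∈ Icc 0 T, W s t ≤ μ * SR)
    (hinit : ∀ s ∈ Icc s₀ SR,
      W s 0 ≤ μ * SR - c * (max (q - s) 0) ^ (m / (m-1)))
    (hlat : ∀ t ∈ Icc 0 T, W s₀ t < μ * SR - c * (max (q + θ*t - s₀) 0) ^ (m / (m-1)))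
    (hG : ∀ s ∈ Icc s₀ SR, 2*θ + μ*(SR - s) ≤
      (n:ℝ)^2 * s ^ ((2:ℝ) - 2/(n:ℝ)) * c^(m-1) * (m/(m-1))^(m-1) * (1/(m-1)))
    (κ : ℝ) (hκ : κ ∈ Ioo 0 θ) :
    ∀ s ∈ Icc s₀ SR, ∀ t ∈ Icc 0 T,
      W s t < μ * SR - c * (max (q + θ*t - s) 0) ^ (m / (m-1)) + κ := by
  have hm1 : (0:ℝ) < m - 1 := by linarith
  set β : ℝ := m / (m - 1) with hβ_def
  have hβ1 : 1 < β := by rw [hβ_def, lt_div_iff₀ hm1]; linarith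
  have hβ0 : 0 < β := by linarith
  have hβm : (β - 1) * (m - 1) = 1 := by rw [hβ_def]; field_simp; ring
  have hβm1 : β - 1 = 1 / (m - 1) := by rw [hβ_def]; field_simp; ring
  have hκ0 : 0 < κ := hκ.1
  have hκθ : κ < θ := hκ.2
  by_contra hcon
  push_neg at hcon
  obtain ⟨s1, hs1, t1, ht1, hcon⟩ := hcon
  -- the bad set
  set dd : ℝ × ℝ → ℝ :=
    fun pt => μ * SR - c * (max (q + θ*pt.2 - pt.1) 0) ^ β + κ - W pt.1 pt.2 with hdd_def
  have hddval : ∀ s' t' : ℝ,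
      dd (s', t') = μ * SR - c * (max (q + θ*t' - s') 0) ^ β + κ - W s' t' := fun _ _ => rfl
  set Dom : Set (ℝ × ℝ) := Icc s₀ SR ×ˢ Icc 0 T with hDom_def
  have hDomC : IsCompact Dom := isCompact_Icc.prod isCompact_Icc
  have hddcont : ContinuousOn dd Dom := by
    apply ContinuousOn.sub _ hWcont
    apply Continuous.continuousOn
    apply Continuous.add _ continuous_const
    apply continuous_const.sub
    apply continuous_const.mul
    exact (continuous_maxrpow hβ0).comp (by fun_prop)
  set S : Set (ℝ × ℝ) := Dom ∩ dd ⁻¹' (Iic 0) with hS_def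
  have hSsub : S ⊆ Dom := inter_subset_left
  have hSne : S.Nonempty := by
    refine ⟨(s1, t1), ⟨⟨hs1, ht1⟩, ?_⟩⟩
    rw [mem_preimage, mem_Iic, hddval]
    linarith
  have hScomp : IsCompact S := by
    have hq' : CompactSpace Dom := isCompact_iff_compactSpace.mp hDomC
    have hcont : Continuous (fun x : Dom => dd x) :=
      continuousOn_iff_continuous_restrict.mp hddcont
    have hclosed : IsClosed {x : Dom | dd x ≤ 0} := isClosed_le hcont continuous_const
    have hc2 : IsCompact {x : Dom | dd x ≤ 0} := hclosed.isCompact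
    have himg := hc2.image continuous_subtype_val
    convert himg using 1
    ext pt
    constructor
    · rintro ⟨h1, h2⟩; exact ⟨⟨pt, h1⟩, h2, rfl⟩
    · rintro ⟨⟨pt', hpt'⟩, h2, rfl⟩; exact ⟨hpt', h2⟩
  set Bad : Set ℝ := Prod.snd '' S with hBad_def
  have hBadcomp : IsCompact Bad := hScomp.image continuous_snd
  have hBadne : Bad.Nonempty := hSne.image _
  set tstar : ℝ := sInf Bad with htstar_def
  have htstarBad : tstar ∈ Bad := hBadcomp.sInf_mem hBadne
  obtain ⟨pstar, hpstarS, hps⟩ := htstarBad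
  set sstar : ℝ := pstar.1 with hsstar_def
  have hpstar : pstar = (sstar, tstar) := by rw [hsstar_def, ← hps]
  have hsstarmem : sstar ∈ Icc s₀ SR := (hSsub hpstarS).1
  have htstarmem : tstar ∈ Icc 0 T := by
    have := (hSsub hpstarS).2; rwa [hpstar] at this
  have hddstar : dd (sstar, tstar) ≤ 0 := by
    have := hpstarS.2; rwa [hpstar] at this
  -- before tstar, dd is positive
  have hpre : ∀ t' ∈ Icc (0:ℝ) T, t' < tstar → ∀ s' ∈ Icc s₀ SR, 0 < dd (s', t') := by
    intro t' ht' hlt s' hs'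
    by_contra hh
    push_neg at hh
    have hmem : t' ∈ Bad := ⟨(s', t'), ⟨⟨hs', ht'⟩, hh⟩, rfl⟩
    have := csInf_le hBadcomp.bddBelow hmem
    rw [← htstar_def] at this
    linarith
  -- positivity at time 0
  have hzero : ∀ s' ∈ Icc s₀ SR, 0 < dd (s', 0) := by
    intro s' hs'
    have h1 := hinit s' hs'
    rw [hddval, show q + θ*0 - s' = q - s' by ring]
    linarith
  have htstar0 : 0 < tstar := by
    rcases lt_or_eq_of_le htstarmem.1 with h | h
    · exact h
    · exfalso
      have := hzero sstar hsstarmem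
      rw [← h] at hddstar
      linarith
  -- at tstar, dd is nonnegative
  have hge : ∀ s' ∈ Icc s₀ SR, 0 ≤ dd (s', tstar) := by
    intro s' hs'
    have hcw : ContinuousWithinAt (fun τ => dd (s', τ)) (Ico 0 tstar) tstar := by
      have h1 : ContinuousWithinAt (fun τ => dd (s', τ)) (Icc 0 T) tstar := by
        have h2 := hddcont.comp (Continuous.continuousOn (by fun_prop :
          Continuous (fun τ : ℝ => ((s', τ) : ℝ × ℝ)))) (fun τ hτ => ⟨hs', hτ⟩)
        exact h2 tstar htstarmem
      exact h1.mono (fun τ hτ => ⟨hτ.1, le_trans hτ.2.le htstarmem.2⟩)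
    have hne : (nhdsWithin tstar (Ico 0 tstar)).NeBot := by
      rw [← mem_closure_iff_nhdsWithin_neBot, closure_Ico (ne_of_lt htstar0)]
      exact ⟨htstar0.le, le_refl _⟩
    apply ge_of_tendsto hcw
    filter_upwards [self_mem_nhdsWithin] with τ hτ
    exact (hpre τ ⟨hτ.1, le_trans hτ.2.le htstarmem.2⟩ hτ.2 s' hs').le
  have heq : dd (sstar, tstar) = 0 := le_antisymm hddstar (hge sstar hsstarmem)
  -- sstar is an interior point
  have hlats : sstar ≠ s₀ := by
    intro h
    have h1 := hlat tstar htstarmem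
    rw [hddval, h] at heq
    linarith
  have hsne : sstar ≠ SR := by
    intro h
    have hWle := hWK sstar hsstarmem tstar htstarmem
    have hmax : max (q + θ*tstar - sstar) 0 = 0 := by
      apply max_eq_right
      have : θ * tstar ≤ θ * T := mul_le_mul_of_nonneg_left htstarmem.2 hθ.le
      rw [h]; linarith
    rw [hddval, hmax, Real.zero_rpow (ne_of_gt hβ0)] at heq
    have := hκ.1
    linarith
  have hsio : sstar ∈ Ioo s₀ SR :=
    ⟨lt_of_le_of_ne hsstarmem.1 (Ne.symm hlats), lt_of_le_of_ne hsstarmem.2 hsne⟩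
  -- the touching point is in the region where Pt is smooth
  set x : ℝ := q + θ*tstar - sstar with hx_def
  have hxpos : 0 < x := by
    by_contra hh
    push_neg at hh
    have hmax : max (q + θ*tstar - sstar) 0 = 0 := max_eq_right (by rw [← hx_def]; exact hh)
    have hWle := hWK sstar hsstarmem tstar htstarmem
    rw [hddval, hmax, Real.zero_rpow (ne_of_gt hβ0)] at heq
    have := hκ.1
    linarith
  have htstarIoo : tstar ∈ Ioo 0 T₀ := ⟨htstar0, lt_of_le_of_lt htstarmem.2 hTT₀⟩
  have hsstar0 : 0 < sstar := lt_trans hs₀ hsio.1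
  -- value of W at the touching point
  have hWV : W sstar tstar = μ * SR - c * x ^ β + κ := by
    rw [hddval, ← hx_def, max_eq_left hxpos.le] at heq
    linarith
  -- spatial hasDerivAt for the barrier
  have haff : ∀ σ' : ℝ, 0 < q + θ*tstar - σ' →
      HasDerivAt (fun z => μ * SR - c * (max (q + θ*tstar - z) 0) ^ β)
        (c * β * (q + θ*tstar - σ') ^ (β - 1)) σ' := by
    intro σ' hσ'
    have hne : (q + θ*tstar) + (-1) * σ' ≠ 0 := by
      rw [show (q + θ*tstar) + (-1) * σ' = q + θ*tstar - σ' by ring]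
      exact ne_of_gt hσ'
    have h1 := ((hasDerivAt_rpow_aff (q + θ*tstar) (-1) β σ' hne).const_mul c).const_sub (μ * SR)
    have hev : (fun z => μ * SR - c * (max (q + θ*tstar - z) 0) ^ β)
        =ᶠ[nhds σ'] (fun z => μ * SR - c * ((q + θ*tstar) + (-1) * z) ^ β) := by
      filter_upwards [Iio_mem_nhds (show σ' < q + θ*tstar by linarith)] with z hz
      rw [mem_Iio] at hz
      rw [max_eq_left (by linarith), show (q + θ*tstar) + (-1) * z = q + θ*tstar - z by ring]
    have h2 := h1.congr_of_eventuallyEq hev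
    refine h2.congr_deriv ?_
    rw [show (q + θ*tstar) + (-1) * σ' = q + θ*tstar - σ' by ring]
    ring
  -- first spatial derivative at the touching point
  have hWds' := hWds sstar hsstarmem tstar htstarIoo
  have hWsval : deriv (fun σ => W σ tstar) sstar = c * β * x ^ (β - 1) := by
    have hmin : IsLocalMin
        (fun σ => μ * SR - c * (max (q + θ*tstar - σ) 0) ^ β + κ - W σ tstar) sstar := by
      apply Filter.eventually_of_mem (Icc_mem_nhds hsio.1 hsio.2)
      intro y hy
      have h1 := hge y hy
      rw [hddval] at h1
      have h2 : (0:ℝ) = μ * SR - c * (max (q + θ*tstar - sstar) 0) ^ β + κ - W sstar tstar := by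
        rw [← hddval, heq]
      show μ * SR - c * (max (q + θ*tstar - sstar) 0) ^ β + κ - W sstar tstar ≤
        μ * SR - c * (max (q + θ*tstar - y) 0) ^ β + κ - W y tstar
      linarith
    have hD := ((haff sstar hxpos).add_const κ).sub hWds'.hasDerivAt
    have hz := hmin.hasDerivAt_eq_zero hD
    rw [← hx_def] at hz
    linarith
  -- the window around sstar
  set η : ℝ := min x (min (sstar - s₀) (SR - sstar)) / 2 with hη_def
  have hη1 : η ≤ x / 2 := by
    rw [hη_def]
    have := min_le_left x (min (sstar - s₀) (SR - sstar))
    linarith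
  have hη2 : η ≤ (sstar - s₀) / 2 := by
    rw [hη_def]
    have h1 := min_le_right x (min (sstar - s₀) (SR - sstar))
    have h2 := min_le_left (sstar - s₀) (SR - sstar)
    linarith
  have hη3 : η ≤ (SR - sstar) / 2 := by
    rw [hη_def]
    have h1 := min_le_right x (min (sstar - s₀) (SR - sstar))
    have h2 := min_le_right (sstar - s₀) (SR - sstar)
    linarith
  have hηpos : 0 < η := by
    rw [hη_def]
    have h1 : 0 < min x (min (sstar - s₀) (SR - sstar)) :=
      lt_min hxpos (lt_min (by linarith [hsio.1]) (by linarith [hsio.2]))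
    linarith
  have hwin : ∀ y : ℝ, y ∈ Ioo (sstar - η) (sstar + η) →
      0 < q + θ*tstar - y ∧ y ∈ Ioo s₀ SR := by
    intro y hy
    rcases hy with ⟨hy1, hy2⟩
    refine ⟨?_, ?_, ?_⟩
    · have : x = q + θ*tstar - sstar := hx_def
      linarith
    · linarith
    · linarith
  -- second spatial derivative at the touching point
  have hWdss' := hWdss sstar hsstarmem tstar htstarIoo
  have hWssval : deriv (deriv (fun σ => W σ tstar)) sstar ≤ -(c * β * (β-1) * x ^ (β-2)) := by
    have hder : ∀ y : ℝ, 0 < q + θ*tstar - y → y ∈ Ioo s₀ SR →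
        HasDerivAt (fun σ => μ * SR - c * (max (q + θ*tstar - σ) 0) ^ β + κ - W σ tstar)
          (c * β * (q + θ*tstar - y) ^ (β - 1) - deriv (fun σ => W σ tstar) y) y :=
      fun y h1 h2 => ((haff y h1).add_const κ).sub
        ((hWds y (Ioo_subset_Icc_self h2) tstar htstarIoo).hasDerivAt)
    have hop : IsOpen ({y : ℝ | 0 < q + θ*tstar - y} ∩ Ioo s₀ SR) :=
      (isOpen_lt continuous_const
        (by fun_prop : Continuous (fun y : ℝ => q + θ*tstar - y))).inter isOpen_Ioo
    have hopmem : ({y : ℝ | 0 < q + θ*tstar - y} ∩ Ioo s₀ SR) ∈ nhds sstar :=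
      hop.mem_nhds ⟨hxpos, hsio⟩
    have hev : deriv (fun σ => μ * SR - c * (max (q + θ*tstar - σ) 0) ^ β + κ - W σ tstar)
        =ᶠ[nhds sstar]
        (fun y => c * β * (q + θ*tstar - y) ^ (β - 1) - deriv (fun σ => W σ tstar) y) := by
      filter_upwards [hopmem] with y hy
      exact (hder y hy.1 hy.2).deriv
    have hfor : HasDerivAt (fun y => c * β * (q + θ*tstar - y) ^ (β - 1))
        (-(c * β * (β-1) * x ^ (β - 2))) sstar := by
      have hne : (q + θ*tstar) + (-1) * sstar ≠ 0 := by
        rw [show (q + θ*tstar) + (-1) * sstar = x by rw [hx_def]; ring]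
        exact hxpos.ne'
      have h1 := (hasDerivAt_rpow_aff (q + θ*tstar) (-1) (β-1) sstar hne).const_mul (c * β)
      have heqf : (fun y : ℝ => c * β * (q + θ*tstar - y) ^ (β - 1))
          = (fun y : ℝ => (c*β) * ((q + θ*tstar) + (-1) * y) ^ (β - 1)) := by
        funext z; rw [show (q + θ*tstar) + (-1) * z = q + θ*tstar - z by ring]
      rw [heqf]
      refine h1.congr_deriv ?_
      rw [show (q + θ*tstar) + (-1) * sstar = x by rw [hx_def]; ring]
      rw [show β - 1 - 1 = β - 2 by ring]
      ring
    have hform := hfor.sub hWdss'.hasDerivAt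
    have h2nd := deriv2_nonneg_of_interior_min
      (g := fun σ => μ * SR - c * (max (q + θ*tstar - σ) 0) ^ β + κ - W σ tstar)
      (a := sstar - η) (b := sstar + η) (x := sstar)
      ⟨by linarith, by linarith⟩
      (by
        intro y hy
        have hymem : y ∈ Icc s₀ SR := ⟨by linarith [hy.1], by linarith [hy.2]⟩
        have h1 := hge y hymem
        rw [hddval] at h1
        have h2 : (0:ℝ) = μ * SR - c * (max (q + θ*tstar - sstar) 0) ^ β + κ - W sstar tstar := by
          rw [← hddval, heq]
        show μ * SR - c * (max (q + θ*tstar - sstar) 0) ^ β + κ - W sstar tstar ≤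
          μ * SR - c * (max (q + θ*tstar - y) 0) ^ β + κ - W y tstar
        linarith)
      (by
        intro y hy
        obtain ⟨h1, h2⟩ := hwin y hy
        exact (hder y h1 h2).differentiableAt)
      (by
        rw [hev.differentiableAt_iff]
        exact hform.differentiableAt)
    have hcalc : deriv (deriv (fun σ => μ * SR - c * (max (q + θ*tstar - σ) 0) ^ β + κ - W σ tstar)) sstar
        = -(c * β * (β-1) * x ^ (β - 2)) - deriv (deriv (fun σ => W σ tstar)) sstar := by
      rw [hev.deriv_eq]
      exact hform.deriv
    rw [hcalc] at h2nd
    linarith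
  -- time derivative at the touching point
  have hafft : HasDerivAt (fun τ => μ * SR - c * (max (q + θ*τ - sstar) 0) ^ β)
      (-(c * (β * x ^ (β - 1) * θ))) tstar := by
    have hne : (q - sstar) + θ * tstar ≠ 0 := by
      rw [show (q - sstar) + θ * tstar = x by rw [hx_def]; ring]
      exact hxpos.ne'
    have h1 := ((hasDerivAt_rpow_aff (q - sstar) θ β tstar hne).const_mul c).const_sub (μ * SR)
    have hev : (fun τ => μ * SR - c * (max (q + θ*τ - sstar) 0) ^ β)
        =ᶠ[nhds tstar] (fun τ => μ * SR - c * ((q - sstar) + θ * τ) ^ β) := by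
      have hop : IsOpen {τ : ℝ | 0 < q + θ*τ - sstar} :=
        isOpen_lt continuous_const (by fun_prop : Continuous (fun τ : ℝ => q + θ*τ - sstar))
      filter_upwards [hop.mem_nhds (show (0:ℝ) < q + θ*tstar - sstar from hxpos)] with τ hτ
      rw [max_eq_left (le_of_lt hτ), show (q - sstar) + θ*τ = q + θ*τ - sstar by ring]
    have h2 := h1.congr_of_eventuallyEq hev
    refine h2.congr_deriv ?_
    rw [show (q - sstar) + θ * tstar = x by rw [hx_def]; ring]
  have hWdt' := hWdt sstar hsstarmem tstar htstarIoo
  have htd := (hafft.add_const κ).sub hWdt'.hasDerivAt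
  have htle : -(c * (β * x ^ (β - 1) * θ)) - deriv (fun τ => W sstar τ) tstar ≤ 0 := by
    have hge' : ∀ τ ∈ Ico (0:ℝ) tstar,
        (fun τ => μ * SR - c * (max (q + θ*τ - sstar) 0) ^ β + κ - W sstar τ) tstar ≤
        (fun τ => μ * SR - c * (max (q + θ*τ - sstar) 0) ^ β + κ - W sstar τ) τ := by
      intro τ hτ
      have hτmem : τ ∈ Icc (0:ℝ) T := ⟨hτ.1, le_trans hτ.2.le htstarmem.2⟩
      have h1 := hpre τ hτmem hτ.2 sstar hsstarmem
      rw [hddval] at h1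
      have h2 : (0:ℝ) = μ * SR - c * (max (q + θ*tstar - sstar) 0) ^ β + κ - W sstar tstar := by
        rw [← hddval, heq]
      show μ * SR - c * (max (q + θ*tstar - sstar) 0) ^ β + κ - W sstar tstar ≤
        μ * SR - c * (max (q + θ*τ - sstar) 0) ^ β + κ - W sstar τ
      linarith
    have h := deriv_nonpos_of_left_ge htstar0 htd.differentiableAt hge'
    rw [htd.deriv] at h
    exact h
  -- the PDE at the touching point
  have hpde := hWpde sstar hsstarmem tstar htstarIoo
  simp only [Peps] at hpde
  rw [hWsval] at hpde
  set WT := deriv (fun τ => W sstar τ) tstar with hWT_def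
  set WSS := deriv (deriv (fun σ => W σ tstar)) sstar with hWSS_def
  set S2 := (n:ℝ)^2 * sstar ^ ((2:ℝ) - 2/(n:ℝ)) with hS2_def
  have hnpos : (0:ℝ) < (n:ℝ) := by
    have : 0 < n := hn
    exact_mod_cast this
  have hS2pos : 0 < S2 := by
    rw [hS2_def]
    have h1 : 0 < sstar ^ ((2:ℝ) - 2/(n:ℝ)) := Real.rpow_pos_of_pos hsstar0 _
    positivity
  have hxb1 : 0 < x ^ (β-1) := Real.rpow_pos_of_pos hxpos _
  have hxb2 : 0 < x ^ (β-2) := Real.rpow_pos_of_pos hxpos _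
  have hWspos : 0 < c * β * x ^ (β-1) := by positivity
  have hWssneg : WSS < 0 := by
    apply lt_of_le_of_lt hWssval
    have : 0 < c * β * (β-1) * x ^ (β-2) := by
      have : 0 < β - 1 := by linarith
      positivity
    linarith
  have hA1 : (c * β * x ^ (β-1)) ^ (m-1) ≤ (c * β * x ^ (β-1) + ε) ^ (m-1) :=
    Real.rpow_le_rpow hWspos.le (by linarith) hm1.le
  have hA2 : S2 * (c * β * x ^ (β-1) + ε) ^ (m-1) * WSS
      ≤ S2 * ((c * β * x ^ (β-1)) ^ (m-1)) * WSS := by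
    apply mul_le_mul_of_nonpos_right _ hWssneg.le
    exact mul_le_mul_of_nonneg_left hA1 hS2pos.le
  have hA3 : S2 * ((c * β * x ^ (β-1)) ^ (m-1)) * WSS
      ≤ S2 * ((c * β * x ^ (β-1)) ^ (m-1)) * (-(c * β * (β-1) * x ^ (β-2))) := by
    apply mul_le_mul_of_nonneg_left hWssval
    have : 0 ≤ (c * β * x ^ (β-1)) ^ (m-1) := Real.rpow_nonneg hWspos.le _
    positivity
  have hWsm : (c * β * x ^ (β-1)) ^ (m-1) = c^(m-1) * β^(m-1) * x := by
    rw [show c * β * x ^ (β-1) = (c*β) * (x^(β-1)) by ring]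
    rw [Real.mul_rpow (by positivity) (Real.rpow_nonneg hxpos.le _)]
    rw [Real.mul_rpow hc.le hβ0.le]
    rw [← Real.rpow_mul hxpos.le, hβm, Real.rpow_one]
  have hxx : x * x ^ (β-2) = x ^ (β-1) := by
    have h := (Real.rpow_add hxpos 1 (β-2)).symm
    rw [Real.rpow_one] at h
    rw [h, show (1:ℝ) + (β-2) = β - 1 by ring]
  have hA4 : S2 * ((c * β * x ^ (β-1)) ^ (m-1)) * (-(c * β * (β-1) * x ^ (β-2)))
      = -(S2 * c^(m-1) * β^(m-1) * (β-1)) * (c * β * x ^ (β-1)) := by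
    rw [hWsm, ← hxx]; ring
  have hchain : -θ * (c * β * x ^ (β-1)) ≤
      (-(S2 * c^(m-1) * β^(m-1) * (β-1)) + (μ * SR - c * x^β + κ) - μ * sstar)
        * (c * β * x ^ (β-1)) := by
    have e1 : WT = S2 * (c * β * x ^ (β-1) + ε) ^ (m-1) * WSS
        + W sstar tstar * (c * β * x ^ (β-1)) - μ * sstar * (c * β * x ^ (β-1)) := by
      linarith [hpde]
    rw [hWV] at e1
    have h5 : WT ≤ S2 * ((c * β * x ^ (β-1)) ^ (m-1)) * WSS
        + (μ * SR - c * x^β + κ) * (c * β * x ^ (β-1)) - μ * sstar * (c * β * x ^ (β-1)) := by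
      linarith [hA2]
    have h6 : WT ≤ -(S2 * c^(m-1) * β^(m-1) * (β-1)) * (c * β * x ^ (β-1))
        + (μ * SR - c * x^β + κ) * (c * β * x ^ (β-1)) - μ * sstar * (c * β * x ^ (β-1)) := by
      linarith [hA3, hA4.le, hA4.ge]
    have h7 : -θ * (c * β * x ^ (β-1)) ≤ WT := by linarith [htle]
    linarith [h6, h7]
  have hdiv : -θ ≤ -(S2 * c^(m-1) * β^(m-1) * (β-1)) + (μ * SR - c * x^β + κ) - μ * sstar :=
    (mul_le_mul_iff_of_pos_right hWspos).mp hchain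
  have hGs := hG sstar hsstarmem
  rw [← hβm1] at hGs
  have hGs' : 2*θ + μ*(SR - sstar) ≤ S2 * c^(m-1) * β^(m-1) * (β-1) := by
    have e2 : (n:ℝ)^2 * sstar ^ ((2:ℝ) - 2/(n:ℝ)) * c^(m-1) * β^(m-1) * (β-1)
        = S2 * c^(m-1) * β^(m-1) * (β-1) := by rw [hS2_def]
    linarith [hGs, e2.symm.le, e2.le]
  have hxβ : (0:ℝ) ≤ c * x^β := by
    have : 0 ≤ x ^ β := Real.rpow_nonneg hxpos.le _
    positivity
  linarith [hdiv, hGs', hxβ, hκ.2]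


set_option maxHeartbeats 1000000 in
/-- **Support expansion** (Theorem 1.1, expanding part, for the mass accumulation function):
if `u₀(ρ) ≥ A (r₁ − ρ)^{1/(m−1)}` near `r₁` for some `A > A_crit`, then there are `T`, `θ > 0`
and `r⋆ ∈ (0,r₁)` with `w(s,t) < μ Rⁿ` for all `s ∈ (r⋆ⁿ, r₁ⁿ + θ t)` and a.e. `t ∈ (0,T)`. -/
theorem support_expansion
    (n : ℕ) (hn : 1 ≤ n) (R m μ T₀ : ℝ) (hR : 0 < R) (hm : 1 < m) (hμ : 0 < μ) (hT₀ : 0 < T₀)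
    (w₀ : ℝ → ℝ) (w : ℝ → ℝ → ℝ) (F : ApproxFamily n R m μ T₀ w₀ w)
    (r₁ : ℝ) (hr₁ : r₁ ∈ Ioo 0 R)
    (u₀ : ℝ → ℝ) (hu₀_meas : Measurable u₀)
    (hu₀_bdd : ∃ M, ∀ ρ ∈ Icc (0:ℝ) R, u₀ ρ ≤ M)
    (hu₀_nonneg : ∀ ρ ∈ Icc (0:ℝ) R, 0 ≤ u₀ ρ)
    (hu₀_mass : (n : ℝ) * ∫ ρ in (0:ℝ)..R, ρ ^ (n - 1) * u₀ ρ = μ * R ^ n)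
    (hu₀_supp : ∀ᵐ ρ ∂volume, ρ ∈ Ioo r₁ R → u₀ ρ = 0)
    (hw₀ : ∀ s ∈ Icc (0:ℝ) (R ^ n), w₀ s = massAccum n u₀ s)
    (Acrit : ℝ)
    (hAcrit : Acrit = (μ * (R ^ n - r₁ ^ n) * (m - 1) / ((n : ℝ) * r₁ ^ (n - 1))) ^ (1 / (m - 1)))
    (hsteep : ∃ A > Acrit, ∃ r₀ ∈ Ioo (0:ℝ) r₁,
      ∀ᵐ ρ ∂volume, ρ ∈ Ioo r₀ r₁ → A * (r₁ - ρ) ^ (1 / (m - 1)) ≤ u₀ ρ) :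
    ∃ T ∈ Ioo (0:ℝ) T₀, ∃ θ > (0:ℝ), ∃ rστ ∈ Ioo (0:ℝ) r₁,
      ∀ᵐ t ∂volume, t ∈ Ioo (0:ℝ) T →
        ∀ s ∈ Ioo (rστ ^ n) (r₁ ^ n + θ * t), w s t < μ * R ^ n := by
  obtain ⟨A, hAgt, r₀, hr₀, hsteepA⟩ := hsteep
  have hm1 : (0:ℝ) < m - 1 := by linarith
  have hm1' : m - 1 ≠ 0 := ne_of_gt hm1
  have hn0 : n ≠ 0 := by omega
  have hnR : (0:ℝ) < (n:ℝ) := by exact_mod_cast Nat.pos_of_ne_zero hn0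
  have hr₁0 : 0 < r₁ := hr₁.1
  have hr₁R : r₁ < R := hr₁.2
  have hpowlt : r₁ ^ n < R ^ n := pow_lt_pow_left₀ hr₁R hr₁0.le hn0
  have hβ1 : 1 < (m/(m-1)) := by rw [lt_div_iff₀ hm1]; linarith
  have hβ0 : 0 < (m/(m-1)) := by linarith
  have hβm : ((m/(m-1)) - 1) * (m - 1) = 1 := by field_simp; ring
  have hβm1 : (m/(m-1)) - 1 = 1 / (m - 1) := by field_simp; ring
  set D : ℝ := (n:ℝ) * r₁ ^ (n - 1) with hD_def
  have hD : 0 < D := by rw [hD_def]; positivity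
  have hX : 0 < μ * (R ^ n - r₁ ^ n) * (m - 1) / D :=
    div_pos (mul_pos (mul_pos hμ (by linarith)) hm1) hD
  have hAcrit0 : 0 < Acrit := by rw [hAcrit]; exact Real.rpow_pos_of_pos hX _
  have hA0 : 0 < A := lt_trans hAcrit0 hAgt
  have hApow : Acrit ^ (m - 1) = μ * (R ^ n - r₁ ^ n) * (m - 1) / D := by
    rw [hAcrit, ← Real.rpow_mul hX.le,
      show 1 / (m-1) * (m-1) = 1 by field_simp, Real.rpow_one]
  have hAp : μ * (R ^ n - r₁ ^ n) * (m - 1) / D < A ^ (m - 1) := by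
    rw [← hApow]
    exact Real.rpow_lt_rpow hAcrit0.le hAgt hm1
  -- the barrier slope function and steepness margin function
  have hDβ : 0 < D ^ (m/(m-1)) := Real.rpow_pos_of_pos hD _
  set cA : ℝ → ℝ := fun y => (n:ℝ) * y ^ (n - 1) * A / ((m/(m-1)) * D ^ (m/(m-1))) with hcA_def
  have hcApos : ∀ y : ℝ, 0 < y → 0 < cA y := by
    intro y hy
    rw [hcA_def]
    positivity
  set G : ℝ → ℝ := fun z => (n:ℝ)^2 * (r₁ - z)^(2*n - 2)
      * (((1 - z) * cA (r₁ - z)) ^ (m - 1)) * (m/(m-1))^(m - 1) * ((m/(m-1)) - 1)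
      - μ * (R^n - (r₁ - z)^n) with hG_def
  -- value of G at 0
  have hcAr₁ : cA r₁ = A / ((m/(m-1)) * D ^ ((m/(m-1)) - 1)) := by
    rw [hcA_def]
    simp only
    rw [show (m/(m-1)) = ((m/(m-1)) - 1) + 1 by ring, Real.rpow_add hD, Real.rpow_one, ← hD_def]
    rw [show ((m/(m-1)) - 1) + 1 - 1 = (m/(m-1)) - 1 by ring]
    field_simp
  have hcAr₁pow : (cA r₁) ^ (m - 1) = A ^ (m - 1) / ((m/(m-1)) ^ (m - 1) * D) := by
    rw [hcAr₁, Real.div_rpow hA0.le (by positivity)]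
    rw [Real.mul_rpow hβ0.le (Real.rpow_nonneg hD.le _)]
    rw [← Real.rpow_mul hD.le, hβm, Real.rpow_one]
  have hn2 : (n:ℝ)^2 * r₁ ^ (2*n - 2) = D^2 := by
    rw [hD_def, mul_pow, ← pow_mul]
    congr 2
    omega
  have hG0 : G 0 = D * A ^ (m - 1) * ((m/(m-1)) - 1) - μ * (R^n - r₁^n) := by
    rw [hG_def]
    simp only [sub_zero, one_mul]
    rw [hcAr₁pow, hn2]
    have hβD : (m/(m-1)) ^ (m-1) ≠ 0 := ne_of_gt (Real.rpow_pos_of_pos hβ0 _)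
    field_simp
  have hG0pos : 0 < G 0 := by
    rw [hG0]
    have h3 : μ * (R^n - r₁^n) * (m-1) / D * (D * ((m/(m-1)) - 1)) < A^(m-1) * (D * ((m/(m-1))-1)) :=
      mul_lt_mul_of_pos_right hAp (mul_pos hD (by linarith))
    have h4 : μ * (R^n - r₁^n) * (m-1) / D * (D * ((m/(m-1)) - 1)) = μ * (R^n - r₁^n) := by
      rw [hβm1]
      field_simp
    rw [h4] at h3
    linarith
  -- continuity of G and choice of z
  have hGcont : ContinuousAt G 0 := by
    rw [hG_def]
    apply ContinuousAt.sub
    · apply ContinuousAt.mul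
      apply ContinuousAt.mul
      apply ContinuousAt.mul
      · exact (by fun_prop : Continuous (fun z : ℝ => (n:ℝ)^2 * (r₁ - z)^(2*n-2))).continuousAt
      · apply ContinuousAt.rpow_const
        · rw [hcA_def]
          exact (by fun_prop : Continuous
            (fun z : ℝ => (1 - z) * ((n:ℝ) * (r₁ - z) ^ (n - 1) * A / ((m/(m-1)) * D ^ (m/(m-1)))))).continuousAt
        · exact Or.inr hm1.le
      · exact continuousAt_const
      · exact continuousAt_const
    · exact (by fun_prop : Continuous (fun z : ℝ => μ * (R^n - (r₁ - z)^n))).continuousAt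
  have hGev : ∀ᶠ z in nhds (0:ℝ), 0 < G z := hGcont.eventually (eventually_gt_nhds hG0pos)
  obtain ⟨ζ, hζ0, hball⟩ := Metric.eventually_nhds_iff.mp hGev
  set z : ℝ := min (ζ/2) (min (1/2) ((r₁ - r₀)/2)) with hz_def
  have hz0 : 0 < z := by
    rw [hz_def]
    have := hr₀.2
    exact lt_min (by positivity) (lt_min (by norm_num) (by linarith))
  have hzζ : z < ζ := by
    have h1 := min_le_left (ζ/2) (min (1/2) ((r₁ - r₀)/2))
    rw [hz_def]; linarith
  have hz1 : z < 1 := by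
    have h1 := min_le_right (ζ/2) (min (1/2) ((r₁ - r₀)/2))
    have h2 := min_le_left (1/2 : ℝ) ((r₁ - r₀)/2)
    rw [hz_def]; linarith
  have hzr : z < r₁ - r₀ := by
    have h1 := min_le_right (ζ/2) (min (1/2) ((r₁ - r₀)/2))
    have h2 := min_le_right (1/2 : ℝ) ((r₁ - r₀)/2)
    have := hr₀.2
    rw [hz_def]; linarith
  have hGz : 0 < G z := by
    apply hball
    rw [Real.dist_eq, sub_zero, abs_of_pos hz0]
    exact hzζ
  set b : ℝ := r₁ - z with hb_def
  have hb0 : 0 < b := by rw [hb_def]; linarith [hr₀.1]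
  have hbr₁ : b < r₁ := by rw [hb_def]; linarith
  have hbr₀ : r₀ < b := by rw [hb_def]; linarith
  set c : ℝ := (1 - z) * cA b with hc_def
  have hcAb : 0 < cA b := hcApos b hb0
  have hc0 : 0 < c := by
    rw [hc_def]
    have h1 : (0:ℝ) < 1 - z := by linarith
    positivity
  have hccA : c < cA b := by
    rw [hc_def]
    nlinarith [mul_pos hz0 hcAb]
  have hGz' : 0 < (n:ℝ)^2 * b^(2*n - 2) * c^(m - 1) * (m/(m-1))^(m - 1) * ((m/(m-1)) - 1)
      - μ * (R^n - b^n) := by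
    have h := hGz
    rw [hG_def] at h
    simp only at h
    rw [← hb_def, ← hc_def] at h
    exact h
  set θ : ℝ := ((n:ℝ)^2 * b^(2*n - 2) * c^(m - 1) * (m/(m-1))^(m - 1) * ((m/(m-1)) - 1)
      - μ * (R^n - b^n)) / 2 with hθ_def
  have hθ0 : 0 < θ := by rw [hθ_def]; linarith [hGz']
  set q : ℝ := r₁ ^ n with hq_def
  set s₀ : ℝ := b ^ n with hs₀_def
  have hs₀pos : 0 < s₀ := by rw [hs₀_def]; positivity
  have hs₀q : s₀ < q := by
    rw [hs₀_def, hq_def]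
    exact pow_lt_pow_left₀ hbr₁ hb0.le hn0
  have hqR : q < R ^ n := hpowlt
  have hs₀R : s₀ < R ^ n := lt_trans hs₀q hqR
  clear_value z b c θ q s₀ D cA G
    -- power identity for the diffusion coefficient
  have hexp0 : (0:ℝ) ≤ (2:ℝ) - 2/(n:ℝ) := by
    have h1 : 2/(n:ℝ) ≤ 2 := by
      rw [div_le_iff₀ hnR]
      have h2 : (1:ℝ) ≤ (n:ℝ) := by exact_mod_cast hn
      linarith only [h2]
    linarith only [h1]
  have hpow2 : ∀ y : ℝ, 0 < y → ((y^n : ℝ)) ^ ((2:ℝ) - 2/(n:ℝ)) = y ^ (2*n - 2) := by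
    intro y hy
    rw [← Real.rpow_natCast y n, ← Real.rpow_mul hy.le]
    rw [show (n:ℝ) * ((2:ℝ) - 2/(n:ℝ)) = 2*(n:ℝ) - 2 by field_simp]
    rw [show (2*(n:ℝ) - 2 : ℝ) = ((2*n - 2 : ℕ) : ℝ) by
      rw [Nat.cast_sub (by omega : 2 ≤ 2*n)]; push_cast; ring]
    exact Real.rpow_natCast y (2*n - 2)
  -- the key structural inequality for the comparison function
  have hGmain : ∀ s ∈ Icc s₀ (R^n), 2*θ + μ*(R^n - s) ≤
      (n:ℝ)^2 * s ^ ((2:ℝ) - 2/(n:ℝ)) * c^(m-1) * (m/(m-1))^(m-1) * (1/(m-1)) := by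
    intro s hs
    have h1 : s₀ ^ ((2:ℝ) - 2/(n:ℝ)) ≤ s ^ ((2:ℝ) - 2/(n:ℝ)) :=
      Real.rpow_le_rpow hs₀pos.le hs.1 hexp0
    have h2 : s₀ ^ ((2:ℝ) - 2/(n:ℝ)) = b ^ (2*n - 2) := by
      rw [hs₀_def]; exact hpow2 b hb0
    have h3 : 2*θ + μ*(R^n - s₀) = (n:ℝ)^2 * b^(2*n - 2) * c^(m-1) * (m/(m-1))^(m-1) * ((m/(m-1)) - 1) := by
      rw [hθ_def]; ring
    have hcm : (0:ℝ) ≤ c^(m-1) * (m/(m-1))^(m-1) * ((m/(m-1))-1) := by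
      have := Real.rpow_nonneg hc0.le (m-1)
      have := Real.rpow_nonneg hβ0.le (m-1)
      have : (0:ℝ) ≤ (m/(m-1)) - 1 := by linarith
      positivity
    have h4 : (n:ℝ)^2 * b^(2*n-2) * c^(m-1) * (m/(m-1))^(m-1) * ((m/(m-1)) - 1)
        ≤ (n:ℝ)^2 * s ^ ((2:ℝ) - 2/(n:ℝ)) * c^(m-1) * (m/(m-1))^(m-1) * ((m/(m-1)) - 1) := by
      rw [← h2]
      have h5 : (n:ℝ)^2 * (s₀ ^ ((2:ℝ) - 2/(n:ℝ))) ≤ (n:ℝ)^2 * (s ^ ((2:ℝ) - 2/(n:ℝ))) :=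
        mul_le_mul_of_nonneg_left h1 (by positivity)
      calc (n:ℝ)^2 * s₀ ^ ((2:ℝ) - 2/(n:ℝ)) * c^(m-1) * (m/(m-1))^(m-1) * ((m/(m-1)) - 1)
          = ((n:ℝ)^2 * (s₀ ^ ((2:ℝ) - 2/(n:ℝ)))) * (c^(m-1) * (m/(m-1))^(m-1) * ((m/(m-1))-1)) := by ring
        _ ≤ ((n:ℝ)^2 * (s ^ ((2:ℝ) - 2/(n:ℝ)))) * (c^(m-1) * (m/(m-1))^(m-1) * ((m/(m-1))-1)) :=
            mul_le_mul_of_nonneg_right h5 hcm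
        _ = (n:ℝ)^2 * s ^ ((2:ℝ) - 2/(n:ℝ)) * c^(m-1) * (m/(m-1))^(m-1) * ((m/(m-1)) - 1) := by ring
    have h6 : μ*(R^n - s) ≤ μ*(R^n - s₀) := by
      have h62 := mul_le_mul_of_nonneg_left hs.1 hμ.le
      linarith only [h62]
    calc 2*θ + μ*(R^n - s) ≤ 2*θ + μ*(R^n - s₀) := by linarith only [h6]
      _ = (n:ℝ)^2 * b^(2*n-2) * c^(m-1) * (m/(m-1))^(m-1) * ((m/(m-1)) - 1) := h3
      _ ≤ (n:ℝ)^2 * s ^ ((2:ℝ) - 2/(n:ℝ)) * c^(m-1) * (m/(m-1))^(m-1) * ((m/(m-1)) - 1) := h4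
      _ = (n:ℝ)^2 * s ^ ((2:ℝ) - 2/(n:ℝ)) * c^(m-1) * (m/(m-1))^(m-1) * (1/(m-1)) := by
          rw [hβm1]
  -- the initial-data estimate via the mass accumulation bound
  have hw₀est : ∀ s ∈ Icc s₀ q, cA b * (q - s) ^ (m/(m-1)) ≤ μ * R^n - w₀ s := by
    intro s hs
    have hmb := massAccum_bound n hn R m μ hR hm r₁ hr₁ u₀ hu₀_meas hu₀_bdd hu₀_nonneg
      hu₀_mass A hA0 r₀ hr₀ hsteepA b ⟨hbr₀, hbr₁⟩ s (by
        rw [← hs₀_def, ← hq_def]; exact hs)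
    rw [← hq_def, ← hD_def] at hmb
    have heq2 : (n:ℝ) * b^(n-1) * A / (m/(m-1)) * ((q - s)/D) ^ (m/(m-1)) = cA b * (q - s) ^ (m/(m-1)) := by
      have hqs : (0:ℝ) ≤ q - s := by linarith [hs.2]
      rw [Real.div_rpow hqs hD.le, hcA_def]
      field_simp
    rw [heq2] at hmb
    rw [hw₀ s ⟨le_trans hs₀pos.le hs.1, by linarith [hs.2, hqR.le]⟩]
    exact hmb
  have hw₀init : ∀ s ∈ Icc s₀ (R^n), w₀ s ≤ μ * R^n - c * (max (q - s) 0) ^ (m/(m-1)) := by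
    intro s hs
    by_cases hcase : s ≤ q
    · have h1 := hw₀est s ⟨hs.1, hcase⟩
      have hqs : (0:ℝ) ≤ q - s := by linarith
      rw [max_eq_left hqs]
      have h2 : c * (q - s) ^ (m/(m-1)) ≤ cA b * (q - s) ^ (m/(m-1)) :=
        mul_le_mul_of_nonneg_right hccA.le (Real.rpow_nonneg hqs _)
      linarith only [h1, h2]
    · rw [max_eq_right (by linarith : q - s ≤ 0), Real.zero_rpow (ne_of_gt hβ0)]
      have h1 : w₀ s ≤ w₀ (R^n) :=
        F.w₀_mono ⟨le_trans hs₀pos.le hs.1, hs.2⟩ ⟨by positivity, le_refl _⟩ hs.2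
      rw [F.w₀_top] at h1
      linarith only [h1]
  -- choice of δ and t₀
  have hqs₀ : (0:ℝ) < q - s₀ := by linarith
  set δ : ℝ := (cA b - c) * (q - s₀) ^ (m/(m-1)) / 2 with hδ_def
  have hδ0 : 0 < δ := by
    rw [hδ_def]
    have h1 : 0 < cA b - c := by linarith
    have h2 : 0 < (q - s₀) ^ (m/(m-1)) := Real.rpow_pos_of_pos hqs₀ _
    positivity
  clear_value δ
  obtain ⟨t₀, ht₀mem, ht₀⟩ := F.weps_unif_init s₀ ⟨hs₀pos, hs₀R⟩ δ hδ0
  -- choice of T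
  have hTex : ∃ T : ℝ, 0 < T ∧ T < t₀ ∧ T < T₀ ∧ θ * T ≤ R^n - q ∧
      c * (q + θ*T - s₀) ^ (m/(m-1)) < c * (q - s₀) ^ (m/(m-1)) + δ := by
    have hfc : ContinuousAt (fun T' : ℝ => c * (q + θ*T' - s₀) ^ (m/(m-1))) 0 := by
      apply ContinuousAt.mul continuousAt_const
      apply ContinuousAt.rpow_const
      · exact (by fun_prop : Continuous (fun T' : ℝ => q + θ*T' - s₀)).continuousAt
      · exact Or.inr hβ0.le
    have hval : (fun T' : ℝ => c * (q + θ*T' - s₀) ^ (m/(m-1))) 0 < c * (q - s₀) ^ (m/(m-1)) + δ := by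
      simp only [mul_zero, add_zero]
      linarith only [hδ0]
    have hev1 : ∀ᶠ T' in nhds (0:ℝ), c * (q + θ*T' - s₀) ^ (m/(m-1)) < c * (q - s₀) ^ (m/(m-1)) + δ :=
      hfc.eventually (eventually_lt_nhds hval)
    have hev2 : ∀ᶠ T' in nhdsWithin (0:ℝ) (Ioi 0),
        c * (q + θ*T' - s₀) ^ (m/(m-1)) < c * (q - s₀) ^ (m/(m-1)) + δ :=
      eventually_nhdsWithin_of_eventually_nhds hev1
    have hζ2 : (0:ℝ) < min t₀ (min T₀ ((R^n - q)/θ)) :=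
      lt_min ht₀mem.1 (lt_min hT₀ (div_pos (by linarith only [hqR]) hθ0))
    have hev3 : Ioo (0:ℝ) (min t₀ (min T₀ ((R^n - q)/θ))) ∈ nhdsWithin (0:ℝ) (Ioi 0) :=
      Ioo_mem_nhdsGT_of_mem ⟨le_refl _, hζ2⟩
    obtain ⟨T, hT1, hT2⟩ := (hev2.and hev3).exists
    refine ⟨T, hT2.1, ?_, ?_, ?_, hT1⟩
    · exact lt_of_lt_of_le hT2.2 (min_le_left _ _)
    · exact lt_of_lt_of_le hT2.2 (le_trans (min_le_right _ _) (min_le_left _ _))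
    · have h1 : T ≤ (R^n - q)/θ :=
        le_trans hT2.2.le (le_trans (min_le_right _ _) (min_le_right _ _))
      have h2 := (le_div_iff₀ hθ0).mp h1
      linarith only [h2]
  obtain ⟨T, hT0, hTt₀, hTT₀, hθT, hcT⟩ := hTex
  have hqθT : q + θ * T ≤ R^n := by linarith only [hθT]
  -- global upper bound for weps
  have hbound : ∀ ε ∈ Ioo (0:ℝ) 1, ∀ s' ∈ Icc (0:ℝ) (R^n), ∀ t ∈ Icc (0:ℝ) T,
      F.weps ε s' t ≤ μ * R^n := by
    intro ε hε s' hs' t ht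
    have htT₀ : t ∈ Icc (0:ℝ) T₀ := ⟨ht.1, le_trans ht.2 (by linarith only [hTT₀])⟩
    rcases eq_or_lt_of_le ht.1 with h0 | h0
    · rw [← h0, F.weps_init ε hε s' hs']
      have h1 : w₀ s' ≤ w₀ (R^n) := F.w₀_mono hs' ⟨by positivity, le_refl _⟩ hs'.2
      rw [F.w₀_top] at h1
      exact h1
    · have htIoo : t ∈ Ioo (0:ℝ) T₀ := ⟨h0, lt_of_le_of_lt ht.2 hTT₀⟩
      have hmono : MonotoneOn (fun σ => F.weps ε σ t) (Icc 0 (R^n)) := by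
        apply StrictMonoOn.monotoneOn
        apply strictMonoOn_of_deriv_pos (convex_Icc _ _)
        · exact (F.weps_cont ε hε).comp
            (Continuous.continuousOn (by fun_prop : Continuous (fun σ : ℝ => ((σ, t) : ℝ × ℝ))))
            (fun σ hσ => ⟨hσ, htT₀⟩)
        · intro σ hσ
          rw [interior_Icc] at hσ
          exact F.weps_ds_pos ε hε σ (Ioo_subset_Icc_self hσ) t htIoo
      have h1 : F.weps ε s' t ≤ F.weps ε (R^n) t :=
        hmono hs' ⟨by positivity, le_refl _⟩ hs'.2
      rw [F.weps_bcR ε hε t htT₀] at h1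
      exact h1
  -- lateral bound at s₀
  have hlatm : ∀ ε ∈ Ioo (0:ℝ) 1, ∀ t ∈ Icc (0:ℝ) T,
      F.weps ε s₀ t < μ * R^n - c * (max (q + θ*t - s₀) 0) ^ (m/(m-1)) := by
    intro ε hε t ht
    have hwb : F.weps ε s₀ t ≤ w₀ s₀ + δ := by
      rcases eq_or_lt_of_le ht.1 with h0 | h0
      · rw [← h0, F.weps_init ε hε s₀ ⟨hs₀pos.le, hs₀R.le⟩]
        linarith only [hδ0]
      · have h1 := ht₀ t ⟨h0, lt_of_le_of_lt ht.2 hTt₀⟩ ε hε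
        have h2 := abs_le.mp h1
        linarith only [h2.1, h2.2]
    have hx0 : (0:ℝ) ≤ q + θ*t - s₀ := by
      have hx1 := mul_nonneg hθ0.le ht.1
      linarith only [hx1, hs₀q]
    rw [max_eq_left hx0]
    have h3 : c * (q + θ*t - s₀) ^ (m/(m-1)) ≤ c * (q + θ*T - s₀) ^ (m/(m-1)) := by
      apply mul_le_mul_of_nonneg_left _ hc0.le
      apply Real.rpow_le_rpow hx0 _ hβ0.le
      have hx2 := mul_le_mul_of_nonneg_left ht.2 hθ0.le
      linarith only [hx2]
    have h4 := hw₀est s₀ ⟨le_refl _, hs₀q.le⟩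
    have h5 : cA b * (q - s₀) ^ (m/(m-1)) = c * (q - s₀) ^ (m/(m-1)) + 2*δ := by
      rw [hδ_def]; ring
    linarith only [hcT, hwb, h3, h4, h5]
  -- comparison for each member of the approximating sequence
  have hcomp : ∀ j : ℕ, ∀ s' ∈ Icc s₀ (R^n), ∀ t ∈ Icc (0:ℝ) T,
      F.weps (F.epsSeq j) s' t ≤ μ * R^n - c * (max (q + θ*t - s') 0) ^ (m/(m-1)) := by
    intro j s' hs' t ht
    have hε := F.epsSeq_mem j
    have hsub : Icc s₀ (R^n) ⊆ Icc (0:ℝ) (R^n) := Icc_subset_Icc hs₀pos.le (le_refl _)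
    have hkey : ∀ κ ∈ Ioo (0:ℝ) θ,
        F.weps (F.epsSeq j) s' t < μ * R^n - c * (max (q + θ*t - s') 0) ^ (m/(m-1)) + κ := by
      intro κ hκ
      exact comparison_principle n hn m μ (F.epsSeq j) hm hε.1 hμ (R^n) q s₀ θ c T T₀
        hT0 hTT₀ hs₀pos hs₀q hqθT hθ0 hc0 (F.weps (F.epsSeq j))
        ((F.weps_cont _ hε).mono (prod_mono (Icc_subset_Icc hs₀pos.le (le_refl _))
          (Icc_subset_Icc (le_refl _) (by linarith only [hTT₀]))))
        (fun s hs t' ht' => F.weps_diff_t _ hε s (hsub hs) t' ht')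
        (fun s hs t' ht' => F.weps_diff_s _ hε s (hsub hs) t' ht')
        (fun s hs t' ht' => F.weps_diff_ss _ hε s (hsub hs) t' ht')
        (fun s hs t' ht' => F.weps_pde _ hε s (hsub hs) t' ht')
        (fun s hs t' ht' => hbound _ hε s (hsub hs) t' ht')
        (fun s hs => by
          rw [F.weps_init _ hε s (hsub hs)]
          exact hw₀init s hs)
        (fun t' ht' => hlatm _ hε t' ht')
        hGmain κ hκ s' hs' t ht
    by_contra hcon
    push_neg at hcon
    have h2 : 0 < F.weps (F.epsSeq j) s' t
        - (μ * R^n - c * (max (q + θ*t - s') 0) ^ (m/(m-1))) := by linarith only [hcon]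
    have hκIoo : min (θ/2) ((F.weps (F.epsSeq j) s' t
        - (μ * R^n - c * (max (q + θ*t - s') 0) ^ (m/(m-1))))/2) ∈ Ioo (0:ℝ) θ :=
      ⟨lt_min (by linarith only [hθ0]) (by linarith only [h2]),
        lt_of_le_of_lt (min_le_left _ _) (by linarith only [hθ0])⟩
    have h3 := hkey _ hκIoo
    have hκle := min_le_right (θ/2) ((F.weps (F.epsSeq j) s' t
        - (μ * R^n - c * (max (q + θ*t - s') 0) ^ (m/(m-1))))/2)
    linarith only [h2, h3, hκle]
  -- conclusion
  refine ⟨T, ⟨hT0, hTT₀⟩, θ, hθ0, b, ⟨hb0, hbr₁⟩, ?_⟩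
  have hconv := F.weps_conv
  rw [ae_restrict_iff' measurableSet_Icc] at hconv
  filter_upwards [hconv] with t hconvt ht s hsmem
  have htT₀ : t ∈ Icc (0:ℝ) T₀ := ⟨ht.1.le, le_trans ht.2.le (by linarith only [hTT₀])⟩
  have hsa : s₀ ≤ s := by rw [hs₀_def]; exact hsmem.1.le
  have hsq : s < q + θ*t := hsmem.2
  have hsR : s ≤ R^n := by
    have h1 : θ*t ≤ θ*T := mul_le_mul_of_nonneg_left ht.2.le hθ0.le
    linarith only [h1, hθT, hsq]
  have hlim := hconvt htT₀ s ⟨le_trans hs₀pos.le hsa, hsR⟩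
  have hub : ∀ j, F.weps (F.epsSeq j) s t ≤ μ * R^n - c * (max (q + θ*t - s) 0) ^ (m/(m-1)) :=
    fun j => hcomp j s ⟨hsa, hsR⟩ t ⟨ht.1.le, ht.2.le⟩
  have hwle : w s t ≤ μ * R^n - c * (max (q + θ*t - s) 0) ^ (m/(m-1)) :=
    le_of_tendsto hlim (Filter.Eventually.of_forall hub)
  have hxpos : 0 < q + θ*t - s := by linarith only [hsq]
  have hcxb : 0 < c * (max (q + θ*t - s) 0) ^ (m/(m-1)) := by
    rw [max_eq_left hxpos.le]
    exact mul_pos hc0 (Real.rpow_pos_of_pos hxpos _)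
  linarith only [hwle, hcxb]
end

section
/- Let n ≥ 1 be an integer, R > 0, m > 1, μ > 0, T₀ > 0, and fix an admissible approximate family with limit (w₀, w) on [0,Rⁿ]×[0,T₀]. Let r₁ ∈ (0,R) and C > C_crit(r₁). Then there exist r_min ∈ (0, r₁), θ > 0 and λ > 1 such that the following holds for every r₀ ∈ [r_min, r₁): if w₀(s) ≤ μRⁿ − C(r₁ⁿ − s)^{m/(m−1)} for all s ∈ [r₀ⁿ, r₁ⁿ], then there exists T ∈ (0,T₀) such that for almost every t ∈ [0,T] and every s ∈ [r₀ⁿ, Rⁿ]: w(s,t) ≤ μRⁿ − (C/λ)(r₁ⁿ + θt − s)^{m/(m−1)} if s < r₁ⁿ + θt, and w(s,t) ≤ μRⁿ if s ≥ r₁ⁿ + θt. -/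
open Set MeasureTheory Filter Topology

section Aux

lemma deriv_nonneg_of_max_right (φ : ℝ → ℝ) (a t : ℝ) (hat : a < t) (hφ : DifferentiableAt ℝ φ t)
    (hmax : ∀ τ ∈ Icc a t, φ τ ≤ φ t) : 0 ≤ deriv φ t := by
  by_contra h
  push_neg at h
  have hs : Tendsto (slope φ t) (𝓝[≠] t) (𝓝 (deriv φ t)) :=
    hasDerivAt_iff_tendsto_slope.mp hφ.hasDerivAt
  have h1 : ∀ᶠ τ in 𝓝[≠] t, slope φ t τ < 0 := hs.eventually (Iio_mem_nhds h)
  have h2 : ∀ᶠ τ in 𝓝[<] t, slope φ t τ < 0 :=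
    h1.filter_mono (nhdsWithin_mono t fun x hx => ne_of_lt hx)
  have h3 : ∀ᶠ τ in 𝓝[<] t, τ ∈ Ioo a t := Ioo_mem_nhdsLT_of_mem ⟨hat, le_refl t⟩
  obtain ⟨τ, hτ1, hτ2⟩ := (h2.and h3).exists
  have hlt : φ t < φ τ := by
    rw [slope_def_field] at hτ1
    have : 0 < φ τ - φ t := by
      rcases div_neg_iff.mp hτ1 with ⟨hp, hn⟩ | ⟨hn, hp⟩
      · linarith
      · linarith [hτ2.2]
    linarith
  exact absurd (hmax τ ⟨hτ2.1.le, hτ2.2.le⟩) (not_le.mpr hlt)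

lemma secondDeriv_nonpos_of_isLocalMax {f : ℝ → ℝ} {a : ℝ}
    (hf : ∀ᶠ x in 𝓝 a, DifferentiableAt ℝ f x)
    (hd : DifferentiableAt ℝ (deriv f) a) (hmax : IsLocalMax f a) :
    deriv (deriv f) a ≤ 0 := by
  by_contra h
  push_neg at h
  have hg0 : deriv f a = 0 := hmax.deriv_eq_zero
  have hs : Tendsto (slope (deriv f) a) (𝓝[≠] a) (𝓝 (deriv (deriv f) a)) :=
    hasDerivAt_iff_tendsto_slope.mp hd.hasDerivAt
  have h1 : ∀ᶠ x in 𝓝[≠] a, 0 < slope (deriv f) a x := hs.eventually (Ioi_mem_nhds h)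
  rw [eventually_nhdsWithin_iff] at h1
  have hmax' : ∀ᶠ x in 𝓝 a, f x ≤ f a := hmax
  obtain ⟨δ, hδ, hδball⟩ := Metric.eventually_nhds_iff.mp ((h1.and hf).and hmax')
  set b := a + δ / 2 with hb
  have hab : a < b := by simp only [hb]; linarith
  have hball : ∀ x ∈ Icc a b, dist x a < δ := by
    intro x hx
    rw [Real.dist_eq, abs_lt]
    have hxb : x ≤ a + δ/2 := hb ▸ hx.2
    constructor
    · linarith [hx.1]
    · linarith
  have hpos : ∀ x ∈ Ioo a b, 0 < deriv f x := by
    intro x hx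
    have := ((hδball (hball x ⟨hx.1.le, hx.2.le⟩)).1.1 (ne_of_gt hx.1))
    rw [slope_def_field, hg0, sub_zero] at this
    have hxa : 0 < x - a := sub_pos.mpr hx.1
    have := mul_pos this hxa
    rw [div_mul_cancel₀] at this
    · linarith
    · exact ne_of_gt hxa
  have hcont : ContinuousOn f (Icc a b) := fun x hx =>
    ((hδball (hball x hx)).1.2).continuousAt.continuousWithinAt
  have hmono : StrictMonoOn f (Icc a b) := by
    apply strictMonoOn_of_deriv_pos (convex_Icc a b) hcont
    intro x hx
    rw [interior_Icc] at hx
    exact hpos x hx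
  have h5 : f a < f b := hmono ⟨le_refl a, hab.le⟩ ⟨hab.le, le_refl b⟩ hab
  have h6 : f b ≤ f a := (hδball (hball b ⟨hab.le, le_refl b⟩)).2
  linarith

end Aux

set_option maxHeartbeats 1000000 in
/-- **Lemma 4.5 (case of support expansion)**: for `C > C_crit(r₁)` there are `r_min`, `θ > 0`
and `λ > 1` such that, whenever `w₀(s) ≤ μRⁿ − C(r₁ⁿ − s)^{m/(m−1)}` on `[r₀ⁿ, r₁ⁿ]` for some
`r₀ ∈ [r_min, r₁)`, the limit `w` stays below the corresponding expanding comparison function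
on a small time interval. -/
theorem expansion_comparison
    (n : ℕ) (hn : 1 ≤ n) (R m μ T₀ : ℝ) (hR : 0 < R) (hm : 1 < m) (hμ : 0 < μ) (hT₀ : 0 < T₀)
    (w₀ : ℝ → ℝ) (w : ℝ → ℝ → ℝ) (F : ApproxFamily n R m μ T₀ w₀ w)
    (r₁ : ℝ) (hr₁ : r₁ ∈ Ioo 0 R)
    (C : ℝ) (hC : Ccrit n R m μ r₁ < C) :
    ∃ rmin ∈ Ioo (0:ℝ) r₁, ∃ θ > (0:ℝ), ∃ lam > (1:ℝ),
      ∀ r₀ ∈ Ico rmin r₁,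
        (∀ s ∈ Icc (r₀ ^ n) (r₁ ^ n),
          w₀ s ≤ μ * R ^ n - C * (r₁ ^ n - s) ^ (m / (m - 1))) →
        ∃ T ∈ Ioo (0:ℝ) T₀,
          ∀ᵐ t ∂volume, t ∈ Icc (0:ℝ) T →
            ∀ s ∈ Icc (r₀ ^ n) (R ^ n),
              (s < r₁ ^ n + θ * t →
                w s t ≤ μ * R ^ n - C / lam * (r₁ ^ n + θ * t - s) ^ (m / (m - 1))) ∧
              (r₁ ^ n + θ * t ≤ s → w s t ≤ μ * R ^ n) := by
  have hm0 : (0:ℝ) < m - 1 := by linarith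
  have hmpos : (0:ℝ) < m := by linarith
  set p : ℝ := m / (m - 1) with hp_def
  have hp1 : 1 < p := by
    rw [hp_def, lt_div_iff₀ hm0]; linarith
  have hppos : 0 < p := by linarith
  have hpm : p - 1 = 1 / (m - 1) := by
    rw [hp_def]; field_simp; ring
  have hpm1 : (p - 1) * (m - 1) = 1 := by
    rw [hpm]; field_simp
  have hn0 : (0:ℝ) < (n:ℝ) := by exact_mod_cast Nat.pos_of_ne_zero (by omega)
  have hr₁0 : 0 < r₁ := hr₁.1
  have hr₁R : r₁ < R := hr₁.2
  have hRn : (0:ℝ) < R ^ n := pow_pos hR n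
  have hr₁n : (0:ℝ) < r₁ ^ n := pow_pos hr₁0 n
  have hr₁nR : r₁ ^ n < R ^ n := pow_lt_pow_left₀ hr₁R hr₁0.le (by omega)
  have hr₁2n : (0:ℝ) < r₁ ^ (2 * n - 2) := pow_pos hr₁0 _
  -- constants
  set K : ℝ := (n:ℝ)^2 * r₁ ^ (2*n-2) * (C*p) ^ (m-1) * (p-1) with hK_def
  set M : ℝ := μ * (R ^ n - r₁ ^ n) with hM_def
  have hMpos : 0 < M := by
    rw [hM_def]; exact mul_pos hμ (by linarith)
  have hCpos : 0 < C := by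
    have : 0 < Ccrit n R m μ r₁ := by
      unfold Ccrit
      apply mul_pos (by positivity)
      apply Real.rpow_pos_of_pos
      positivity
    linarith
  have hCp : 0 < C * p := mul_pos hCpos hppos
  have hKM : M < K := by
    unfold Ccrit at hC
    set Z : ℝ := μ * (R ^ n - r₁ ^ n) * (m - 1) / (r₁ ^ (2 * n - 2) * (n:ℝ) ^ 2) with hZ_def
    have hZpos : 0 < Z := by rw [hZ_def]; positivity
    have step1 : Z ^ (1/(m-1)) < C * p := by
      have hmul : p * ((m-1)/m) = 1 := by rw [hp_def]; field_simp
      have h2 : p * ((m-1)/m * Z ^ (1/(m-1))) < p * C := by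
        exact mul_lt_mul_of_pos_left hC hppos
      calc Z ^ (1/(m-1)) = p * ((m-1)/m) * Z ^ (1/(m-1)) := by rw [hmul, one_mul]
        _ = p * ((m-1)/m * Z ^ (1/(m-1))) := by ring
        _ < p * C := h2
        _ = C * p := by ring
    have step2 : Z < (C*p) ^ (m-1) := by
      have := Real.rpow_lt_rpow (Real.rpow_nonneg hZpos.le _) step1 hm0
      have h11 : (1/(m-1)) * (m-1) = 1 := by field_simp
      rwa [← Real.rpow_mul hZpos.le, h11, Real.rpow_one] at this
    rw [hZ_def, div_lt_iff₀ (by positivity)] at step2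
    have hK1 : K * (m-1) = (n:ℝ)^2 * r₁ ^ (2*n-2) * (C*p) ^ (m-1) := by
      calc K * (m-1) = ((n:ℝ)^2 * r₁ ^ (2*n-2) * (C*p) ^ (m-1)) * ((p-1)*(m-1)) := by
            rw [hK_def]; ring
        _ = (n:ℝ)^2 * r₁ ^ (2*n-2) * (C*p) ^ (m-1) := by rw [hpm1, mul_one]
    have : M * (m-1) < K * (m-1) := by
      rw [hK1, hM_def]; nlinarith [step2]
    exact lt_of_mul_lt_mul_right this hm0.le
  have hKpos : 0 < K := lt_trans hMpos hKM
  -- lambda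
  set lam : ℝ := (2*K/(K+M)) ^ (p-1) with hlam_def
  have hKMsum : 0 < K + M := by linarith
  have hfrac1 : 1 < 2*K/(K+M) := by
    rw [lt_div_iff₀ hKMsum]; linarith
  have hfracpos : 0 < 2*K/(K+M) := by linarith
  have hlam1 : 1 < lam := by
    rw [hlam_def]
    rw [Real.one_lt_rpow_iff_of_pos hfracpos]
    left; exact ⟨hfrac1, by linarith⟩
  have hlampos : 0 < lam := by linarith
  have hlamK : (C*p/lam) ^ (m-1) = (C*p) ^ (m-1) * ((K+M)/(2*K)) := by
    rw [Real.div_rpow hCp.le hlampos.le]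
    have : lam ^ (m-1) = 2*K/(K+M) := by
      rw [hlam_def, ← Real.rpow_mul hfracpos.le, hpm1, Real.rpow_one]
    rw [this]
    field_simp
  -- theta
  set θ : ℝ := (K - M)/8 with hθ_def
  have hθpos : 0 < θ := by rw [hθ_def]; linarith
  -- Q and rmin
  set Q : ℝ → ℝ := fun ρ =>
    (n:ℝ)^2 * ρ ^ (2*n-2) * (C*p/lam) ^ (m-1) * (p-1) - μ*(R ^ n - ρ ^ n) - θ with hQ_def
  have hQr₁ : 0 < Q r₁ := by
    have hQval : Q r₁ = K * ((K+M)/(2*K)) - M - θ := by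
      simp only [hQ_def, hlamK, hM_def, hK_def]; ring
    have : K * ((K+M)/(2*K)) = (K+M)/2 := by field_simp
    rw [hQval, this, hθ_def]; linarith
  have hQcont : ContinuousAt Q r₁ := by
    have : Continuous Q := by rw [hQ_def]; fun_prop
    exact this.continuousAt
  have hev : ∀ᶠ ρ in 𝓝[<] r₁, 0 < Q ρ ∧ ρ ∈ Ioo 0 r₁ := by
    have h1 : ∀ᶠ ρ in 𝓝 r₁, 0 < Q ρ := hQcont (Ioi_mem_nhds hQr₁)
    have h2 : ∀ᶠ ρ in 𝓝[<] r₁, ρ ∈ Ioo 0 r₁ := Ioo_mem_nhdsLT_of_mem ⟨hr₁0, le_refl r₁⟩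
    exact (h1.filter_mono nhdsWithin_le_nhds).and h2
  obtain ⟨rmin, hQrmin, hrmin⟩ := hev.exists
  have hGrmin : μ*(R ^ n - rmin ^ n) + θ <
      (n:ℝ)^2 * rmin ^ (2*n-2) * (C*p/lam) ^ (m-1) * (p-1) := by
    simp only [hQ_def] at hQrmin; linarith
  clear hQrmin hQcont hQr₁ hev hlamK hfrac1 hfracpos hKM hC
  clear hQ_def Q
  clear_value K M
  clear hK_def hM_def
  clear_value lam θ
  clear hlam_def hθ_def
  clear hKpos hMpos hKMsum K M
  refine ⟨rmin, hrmin, θ, hθpos, lam, hlam1, ?_⟩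
  intro r₀ hr₀ hw₀
  have hrmin0 : 0 < rmin := hrmin.1
  have hr₀0 : 0 < r₀ := lt_of_lt_of_le hrmin0 hr₀.1
  have hr₀r₁ : r₀ < r₁ := hr₀.2
  have hr₀n : (0:ℝ) < r₀ ^ n := pow_pos hr₀0 n
  have hr₀nr₁ : r₀ ^ n < r₁ ^ n := pow_lt_pow_left₀ hr₀r₁ hr₀0.le (by omega)
  have hr₀nR : r₀ ^ n < R ^ n := lt_trans hr₀nr₁ hr₁nR
  have hrminn_le : rmin ^ n ≤ r₀ ^ n := pow_le_pow_left₀ hrmin0.le hr₀.1 n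
  set a : ℝ := r₁ ^ n - r₀ ^ n with ha_def
  have ha : 0 < a := by rw [ha_def]; linarith
  -- choose T'
  have hT'ex : ∃ T' > (0:ℝ), (a + θ * T') ^ p ≤ ((1 + lam)/2) * a ^ p := by
    have hcont : ContinuousAt (fun t : ℝ => (a + θ*t) ^ p) 0 := by
      apply ContinuousAt.rpow_const
      · fun_prop
      · left; simp; positivity
    have hval : (a + θ*(0:ℝ)) ^ p = a ^ p := by norm_num
    have hlt : (a + θ*(0:ℝ)) ^ p < ((1 + lam)/2) * a ^ p := by
      rw [hval]
      have hap : 0 < a ^ p := Real.rpow_pos_of_pos ha p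
      nlinarith
    have h1 : ∀ᶠ t in 𝓝 (0:ℝ), (a + θ*t) ^ p < ((1 + lam)/2) * a ^ p :=
      hcont (Iio_mem_nhds hlt)
    have h2 : ∀ᶠ t in 𝓝[>] (0:ℝ), t ∈ Ioo (0:ℝ) 1 :=
      Ioo_mem_nhdsGT_of_mem ⟨le_refl 0, zero_lt_one⟩
    obtain ⟨T', h3, h4⟩ := ((h1.filter_mono nhdsWithin_le_nhds).and h2).exists
    exact ⟨T', h4.1, h3.le⟩
  obtain ⟨T', hT'pos, hT'⟩ := hT'ex
  set B : ℝ := C / lam with hB_def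
  have hBpos : 0 < B := div_pos hCpos hlampos
  have hBC : B ≤ C := by
    rw [hB_def, div_le_iff₀ hlampos]; nlinarith
  set δ : ℝ := (C * a ^ p - B * (a + θ*T') ^ p)/2 with hδ_def
  have hδpos : 0 < δ := by
    rw [hδ_def]
    have h1 : B * (a + θ*T') ^ p ≤ (C/lam) * (((1+lam)/2) * a ^ p) := by
      rw [hB_def]
      apply mul_le_mul_of_nonneg_left hT' (le_of_lt (div_pos hCpos hlampos))
    have hap : 0 < a ^ p := Real.rpow_pos_of_pos ha p
    have h2 : (C/lam) * (((1+lam)/2) * a ^ p) < C * a ^ p := by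
      rw [div_mul_eq_mul_div, div_lt_iff₀ hlampos]
      nlinarith [mul_pos hCpos hap]
    linarith
  obtain ⟨t₀, ht₀, hinit⟩ := F.weps_unif_init (r₀ ^ n) ⟨hr₀n, hr₀nR⟩ δ hδpos
  set T : ℝ := min (min T' (t₀/2)) (min (T₀/2) ((R ^ n - r₁ ^ n)/θ)) with hT_def
  have hT0 : 0 < T := by
    rw [hT_def]
    apply lt_min (lt_min hT'pos (by linarith [ht₀.1]))
    apply lt_min (by linarith)
    apply div_pos (by linarith) hθpos
  have hTT' : T ≤ T' := le_trans (min_le_left _ _) (min_le_left _ _)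
  have hTt₀ : T < t₀ := lt_of_le_of_lt (le_trans (min_le_left _ _) (min_le_right _ _))
    (by linarith [ht₀.1])
  have hTT₀ : T < T₀ := lt_of_le_of_lt (le_trans (min_le_right _ _) (min_le_left _ _))
    (by linarith)
  have hTfront : θ * T ≤ R ^ n - r₁ ^ n := by
    have : T ≤ (R ^ n - r₁ ^ n)/θ := le_trans (min_le_right _ _) (min_le_right _ _)
    rw [mul_comm, ← le_div_iff₀ hθpos]
    exact this
  set V : ℝ → ℝ → ℝ := fun s t => μ * R ^ n - B * (max (r₁ ^ n + θ*t - s) 0) ^ p with hV_def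
  -- weps is bounded by μ R^n
  have wle : ∀ ε ∈ Ioo (0:ℝ) 1, ∀ s ∈ Icc (0:ℝ) (R ^ n), ∀ t ∈ Icc (0:ℝ) T,
      F.weps ε s t ≤ μ * R ^ n := by
    intro ε hε s hs t htIcc
    have htT₀c : t ∈ Icc (0:ℝ) T₀ := ⟨htIcc.1, le_trans htIcc.2 hTT₀.le⟩
    rcases eq_or_lt_of_le htIcc.1 with h0 | hpos
    · rw [← h0, F.weps_init ε hε s hs]
      have := F.w₀_mono hs (right_mem_Icc.mpr hRn.le) hs.2
      rw [F.w₀_top] at this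
      exact this
    · have htT₀ : t < T₀ := lt_of_le_of_lt htIcc.2 hTT₀
      have hmono : StrictMonoOn (fun σ => F.weps ε σ t) (Icc 0 (R ^ n)) := by
        apply strictMonoOn_of_deriv_pos (convex_Icc _ _)
        · have hg : ContinuousOn (fun σ : ℝ => (σ, t)) (Icc 0 (R ^ n)) := by fun_prop
          exact (F.weps_cont ε hε).comp hg (fun σ hσ => ⟨hσ, htT₀c⟩)
        · intro x hx
          rw [interior_Icc] at hx
          exact F.weps_ds_pos ε hε x ⟨hx.1.le, hx.2.le⟩ t ⟨hpos, htT₀⟩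
      rcases eq_or_lt_of_le hs.2 with hReq | hlt
      · rw [hReq]
        exact (F.weps_bcR ε hε t htT₀c).le
      · have h2 : F.weps ε s t < F.weps ε (R ^ n) t :=
          hmono hs (right_mem_Icc.mpr hRn.le) hlt
        rw [F.weps_bcR ε hε t htT₀c] at h2
        exact h2.le
  -- the comparison estimate
  have key : ∀ ε ∈ Ioo (0:ℝ) 1, ∀ s ∈ Icc (r₀ ^ n) (R ^ n), ∀ t ∈ Icc (0:ℝ) T,
      F.weps ε s t ≤ V s t := by
    intro ε hε s₀ hs₀ t₁ ht₁
    by_contra hcon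
    push_neg at hcon
    have hVcont : Continuous (fun q : ℝ × ℝ => V q.1 q.2) := by
      apply continuous_const.sub
      apply Continuous.mul continuous_const
      apply Continuous.rpow_const
      · fun_prop
      · intro x; right; exact hppos.le
    set d : ℝ × ℝ → ℝ := fun q => F.weps ε q.1 q.2 - V q.1 q.2 with hd_def
    have hKcsub : (Icc (r₀ ^ n) (R ^ n) ×ˢ Icc (0:ℝ) T) ⊆ (Icc 0 (R ^ n) ×ˢ Icc 0 T₀) :=
      prod_mono (Icc_subset_Icc hr₀n.le le_rfl) (Icc_subset_Icc le_rfl hTT₀.le)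
    have hdcont : ContinuousOn d (Icc (r₀ ^ n) (R ^ n) ×ˢ Icc (0:ℝ) T) :=
      ((F.weps_cont ε hε).mono hKcsub).sub hVcont.continuousOn
    obtain ⟨z, hzK, hzmax⟩ := (isCompact_Icc.prod isCompact_Icc).exists_isMaxOn
      ⟨(s₀, t₁), by exact ⟨hs₀, ht₁⟩⟩ hdcont
    obtain ⟨sm, tm⟩ := z
    obtain ⟨hsm, htm⟩ : sm ∈ Icc (r₀ ^ n) (R ^ n) ∧ tm ∈ Icc (0:ℝ) T := hzK
    have hdz : 0 < d (sm, tm) :=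
      lt_of_lt_of_le (sub_pos.mpr hcon)
        (hzmax (show (s₀, t₁) ∈ Icc (r₀ ^ n) (R ^ n) ×ˢ Icc (0:ℝ) T from ⟨hs₀, ht₁⟩))
    have hsm0R : sm ∈ Icc (0:ℝ) (R ^ n) := ⟨le_trans hr₀n.le hsm.1, hsm.2⟩
    -- front positivity at max point
    have hy : 0 < r₁ ^ n + θ * tm - sm := by
      by_contra hyc
      push_neg at hyc
      have hVv : V sm tm = μ * R ^ n := by
        simp only [hV_def, max_eq_right (by linarith : r₁ ^ n + θ*tm - sm ≤ 0),
          Real.zero_rpow (ne_of_gt hppos)]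
        ring
      have hwb := wle ε hε sm hsm0R tm htm
      simp only [hd_def, hVv] at hdz
      linarith
    -- tm > 0
    have htm0 : 0 < tm := by
      rcases eq_or_lt_of_le htm.1 with h0 | h
      swap
      · exact h
      exfalso
      have hθ0 : θ * tm = 0 := by rw [← h0, mul_zero]
      have hsmr₁ : sm < r₁ ^ n := by linarith [hy]
      have hw0sm := hw₀ sm ⟨hsm.1, hsmr₁.le⟩
      have hVv : V sm tm = μ * R ^ n - B * (r₁ ^ n - sm) ^ p := by
        simp only [hV_def]
        rw [show r₁ ^ n + θ*tm - sm = r₁ ^ n - sm by rw [hθ0]; ring,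
          max_eq_left (by linarith : (0:ℝ) ≤ r₁ ^ n - sm)]
      have hBp : B * (r₁ ^ n - sm) ^ p ≤ C * (r₁ ^ n - sm) ^ p :=
        mul_le_mul_of_nonneg_right hBC (Real.rpow_nonneg (by linarith) p)
      have hival : F.weps ε sm tm = w₀ sm := by rw [← h0]; exact F.weps_init ε hε sm hsm0R
      simp only [hd_def, hVv, hival] at hdz
      linarith
    -- sm > r₀^n
    have hsmgt : r₀ ^ n < sm := by
      rcases eq_or_lt_of_le hsm.1 with h0 | h
      swap
      · exact h
      exfalso
      have htmt₀ : tm ∈ Ioo 0 t₀ := ⟨htm0, lt_of_le_of_lt htm.2 hTt₀⟩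
      have habs := hinit tm htmt₀ ε hε
      have h1 : F.weps ε (r₀ ^ n) tm ≤ w₀ (r₀ ^ n) + δ := by
        have := abs_le.mp habs
        linarith [this.2]
      have h2 : w₀ (r₀ ^ n) ≤ μ * R ^ n - C * a ^ p := by
        have := hw₀ (r₀ ^ n) ⟨le_rfl, hr₀nr₁.le⟩
        rw [show r₁ ^ n - r₀ ^ n = a from ha_def.symm] at this
        exact this
      have h3 : (a + θ*tm) ^ p ≤ (a + θ*T') ^ p := by
        apply Real.rpow_le_rpow (by positivity)
        · have : θ * tm ≤ θ * T' := by
            apply mul_le_mul_of_nonneg_left (le_trans htm.2 hTT') hθpos.le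
          linarith
        · exact hppos.le
      have h4 : B * (a + θ*tm) ^ p + δ ≤ C * a ^ p := by
        have hδeq : C * a ^ p - B * (a + θ*T') ^ p = 2*δ := by rw [hδ_def]; ring
        have h3' : B * (a + θ*tm) ^ p ≤ B * (a + θ*T') ^ p :=
          mul_le_mul_of_nonneg_left h3 hBpos.le
        linarith
      have hVv : V (r₀ ^ n) tm = μ * R ^ n - B * (a + θ*tm) ^ p := by
        simp only [hV_def]
        rw [show r₁ ^ n + θ*tm - r₀ ^ n = a + θ*tm by rw [ha_def]; ring,
          max_eq_left (by positivity : (0:ℝ) ≤ a + θ*tm)]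
      rw [← h0] at hdz
      simp only [hd_def, hVv] at hdz
      linarith
    have hsmlt : sm < R ^ n := by
      have h2 : θ * tm ≤ θ * T := mul_le_mul_of_nonneg_left htm.2 hθpos.le
      linarith [hy, hTfront]
    have htmT₀ : tm ∈ Ioo (0:ℝ) T₀ := ⟨htm0, lt_of_le_of_lt htm.2 hTT₀⟩
    -- interior analysis
    have hsmpos : 0 < sm := lt_of_lt_of_le hr₀n hsm.1
    have hc : sm < r₁ ^ n + θ * tm := by linarith
    -- spatial comparison function and its derivatives
    set ψ : ℝ → ℝ := fun σ => μ * R ^ n - B * (r₁ ^ n + θ * tm - σ) ^ p with hψ_def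
    set ψ' : ℝ → ℝ := fun σ => B * p * (r₁ ^ n + θ * tm - σ) ^ (p-1) with hψ'_def
    have hlin : ∀ σ : ℝ, HasDerivAt (fun x : ℝ => r₁ ^ n + θ * tm - x) (-1) σ := by
      intro σ
      simpa using (hasDerivAt_id σ).const_sub (r₁ ^ n + θ * tm)
    have hψd : ∀ σ, σ < r₁ ^ n + θ * tm → HasDerivAt ψ (ψ' σ) σ := by
      intro σ hσ
      have h2 := (hlin σ).rpow_const (p := p)
        (Or.inl (by intro hz; rw [sub_eq_zero] at hz; linarith))
      have h3 := (h2.const_mul B).const_sub (μ * R ^ n)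
      convert h3 using 1
      · rfl
      · rfl
      simp only [hψ'_def]
      ring
    have hψ'd : ∀ σ, σ < r₁ ^ n + θ * tm →
        HasDerivAt ψ' (-(B * p * (p-1) * (r₁ ^ n + θ * tm - σ) ^ (p-2))) σ := by
      intro σ hσ
      have h2 := (hlin σ).rpow_const (p := p - 1)
        (Or.inl (by intro hz; rw [sub_eq_zero] at hz; linarith))
      rw [show p - 1 - 1 = p - 2 by ring] at h2
      have h3 := h2.const_mul (B * p)
      convert h3 using 1
      · rfl
      · rfl
      ring
    -- local max in the spatial direction
    have hVψ : ∀ σ, σ < r₁ ^ n + θ * tm → V σ tm = ψ σ := by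
      intro σ hσ
      simp only [hV_def, hψ_def, max_eq_left (by linarith : (0:ℝ) ≤ r₁ ^ n + θ * tm - σ)]
    have hIcc_nhds : Icc (r₀ ^ n) (R ^ n) ∈ 𝓝 sm := Icc_mem_nhds hsmgt hsmlt
    have hlocmax : IsLocalMax (fun σ => F.weps ε σ tm - ψ σ) sm := by
      have h1 : ∀ᶠ σ in 𝓝 sm, F.weps ε σ tm - ψ σ ≤ F.weps ε sm tm - ψ sm := by
        filter_upwards [hIcc_nhds, Iio_mem_nhds hc] with σ hσ hσc
        have hd1 : d (σ, tm) ≤ d (sm, tm) :=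
          hzmax (show (σ, tm) ∈ Icc (r₀ ^ n) (R ^ n) ×ˢ Icc (0:ℝ) T from ⟨hσ, htm⟩)
        simp only [hd_def] at hd1
        rw [← hVψ σ hσc, ← hVψ sm hc]
        exact hd1
      exact h1
    have hwdiff_ev : ∀ᶠ σ in 𝓝 sm, DifferentiableAt ℝ (fun x => F.weps ε x tm) σ := by
      filter_upwards [Ioo_mem_nhds hsmpos hsmlt] with σ hσ
      exact F.weps_diff_s ε hε σ ⟨hσ.1.le, hσ.2.le⟩ tm htmT₀
    have hψd_ev : ∀ᶠ σ in 𝓝 sm, DifferentiableAt ℝ ψ σ := by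
      filter_upwards [Iio_mem_nhds hc] with σ hσ
      exact (hψd σ hσ).differentiableAt
    have hhd_ev : ∀ᶠ σ in 𝓝 sm, DifferentiableAt ℝ (fun x => F.weps ε x tm - ψ x) σ := by
      filter_upwards [hwdiff_ev, hψd_ev] with σ h1 h2
      exact h1.sub h2
    have hderiv_ev : deriv (fun x => F.weps ε x tm - ψ x)
        =ᶠ[𝓝 sm] fun σ => deriv (fun x => F.weps ε x tm) σ - ψ' σ := by
      filter_upwards [hwdiff_ev, hψd_ev, Iio_mem_nhds hc] with σ h1 h2 hσc
      rw [deriv_fun_sub h1 h2, (hψd σ hσc).deriv]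
    -- first derivative vanishes at the max
    have hX : deriv (fun σ => F.weps ε σ tm) sm
        = B * p * (r₁ ^ n + θ * tm - sm) ^ (p-1) := by
      have h0 : deriv (fun x => F.weps ε x tm - ψ x) sm = 0 := hlocmax.deriv_eq_zero
      have h1 : deriv (fun x => F.weps ε x tm - ψ x) sm
          = deriv (fun x => F.weps ε x tm) sm - ψ' sm := hderiv_ev.self_of_nhds
      simp only [hψ'_def] at h1
      linarith [h0, h1.symm]
    -- second derivative test at the max
    have hdd2 : DifferentiableAt ℝ (deriv (fun x => F.weps ε x tm - ψ x)) sm := by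
      rw [hderiv_ev.differentiableAt_iff]
      exact (F.weps_diff_ss ε hε sm hsm0R tm htmT₀).sub (hψ'd sm hc).differentiableAt
    have h2nd := secondDeriv_nonpos_of_isLocalMax hhd_ev hdd2 hlocmax
    have hDss : deriv (deriv (fun σ => F.weps ε σ tm)) sm
        ≤ -(B * p * (p-1) * (r₁ ^ n + θ * tm - sm) ^ (p-2)) := by
      have h1 : deriv (deriv (fun x => F.weps ε x tm - ψ x)) sm
          = deriv (fun σ => deriv (fun x => F.weps ε x tm) σ - ψ' σ) sm :=
        hderiv_ev.deriv_eq
      rw [deriv_fun_sub (F.weps_diff_ss ε hε sm hsm0R tm htmT₀)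
        (hψ'd sm hc).differentiableAt, (hψ'd sm hc).deriv] at h1
      linarith [h2nd, h1]
    -- time derivative at the max
    have hVtev : (fun τ => V sm τ)
        =ᶠ[𝓝 tm] fun τ => μ * R ^ n - B * (r₁ ^ n + θ * τ - sm) ^ p := by
      have hcont : Continuous fun τ : ℝ => r₁ ^ n + θ * τ - sm := by fun_prop
      have hopen : ∀ᶠ τ in 𝓝 tm, 0 < r₁ ^ n + θ * τ - sm :=
        (hcont.tendsto tm) (Ioi_mem_nhds hy)
      filter_upwards [hopen] with τ hτ
      simp only [hV_def, max_eq_left hτ.le]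
    have hχ : HasDerivAt (fun τ => μ * R ^ n - B * (r₁ ^ n + θ * τ - sm) ^ p)
        (-(B * p * (r₁ ^ n + θ * tm - sm) ^ (p-1) * θ)) tm := by
      have h1 : HasDerivAt (fun τ : ℝ => r₁ ^ n + θ * τ - sm) θ tm := by
        simpa using (((hasDerivAt_id tm).const_mul θ).const_add (r₁ ^ n)).sub_const sm
      have h2 := h1.rpow_const (p := p) (Or.inl (ne_of_gt hy))
      have h3 := (h2.const_mul B).const_sub (μ * R ^ n)
      convert h3 using 1
      · rfl
      · rfl
      ring
    have hVt : HasDerivAt (fun τ => V sm τ)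
        (-(B * p * (r₁ ^ n + θ * tm - sm) ^ (p-1) * θ)) tm :=
      hχ.congr_of_eventuallyEq hVtev
    have hφd : DifferentiableAt ℝ (fun τ => F.weps ε sm τ - V sm τ) tm :=
      (F.weps_diff_t ε hε sm hsm0R tm htmT₀).sub hVt.differentiableAt
    have hφmax : ∀ τ ∈ Icc (0:ℝ) tm, F.weps ε sm τ - V sm τ ≤ F.weps ε sm tm - V sm tm := by
      intro τ hτ
      have hd1 : d (sm, τ) ≤ d (sm, tm) :=
        hzmax (show (sm, τ) ∈ Icc (r₀ ^ n) (R ^ n) ×ˢ Icc (0:ℝ) T from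
          ⟨hsm, ⟨hτ.1, le_trans hτ.2 htm.2⟩⟩)
      simpa [hd_def] using hd1
    have hφ0 := deriv_nonneg_of_max_right (fun τ => F.weps ε sm τ - V sm τ) 0 tm htm0 hφd hφmax
    have hDt : -(B * p * (r₁ ^ n + θ * tm - sm) ^ (p-1) * θ)
        ≤ deriv (fun τ => F.weps ε sm τ) tm := by
      have h1 : deriv (fun τ => F.weps ε sm τ - V sm τ) tm
          = deriv (fun τ => F.weps ε sm τ) tm
            - (-(B * p * (r₁ ^ n + θ * tm - sm) ^ (p-1) * θ)) := by
        rw [deriv_fun_sub (F.weps_diff_t ε hε sm hsm0R tm htmT₀) hVt.differentiableAt, hVt.deriv]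
      rw [h1] at hφ0
      linarith
    -- the PDE at the max point
    have hpde := F.weps_pde ε hε sm hsm0R tm htmT₀
    rw [Peps, hX] at hpde
    -- final arithmetic contradiction
    set Y : ℝ := r₁ ^ n + θ * tm - sm with hY_def
    have hYpos : 0 < Y := hy
    have hε0 : 0 < ε := hε.1
    have hBp_pos : 0 < B * p := mul_pos hBpos hppos
    have hβpos : 0 < B * p * Y ^ (p-1) := mul_pos hBp_pos (Real.rpow_pos_of_pos hYpos _)
    set e : ℝ := (2:ℝ) - 2 / (n:ℝ) with he_def
    have he0 : 0 ≤ e := by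
      rw [he_def]
      have h1 : (1:ℝ) ≤ (n:ℝ) := by exact_mod_cast hn
      have h2 : 2 / (n:ℝ) ≤ 2 := by
        rw [div_le_iff₀ hn0]; linarith only [h1]
      linarith
    have hsm_rpow : (rmin:ℝ) ^ (2*n-2) ≤ sm ^ e := by
      have h1 : ((rmin ^ n : ℝ)) ^ e ≤ sm ^ e :=
        Real.rpow_le_rpow (by positivity) (le_trans hrminn_le hsm.1) he0
      have h2 : ((rmin ^ n : ℝ)) ^ e = (rmin:ℝ) ^ (2*n-2) := by
        rw [← Real.rpow_natCast rmin n, ← Real.rpow_mul hrmin0.le,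
          ← Real.rpow_natCast rmin (2*n-2)]
        congr 1
        have hcast : ((2*n-2 : ℕ) : ℝ) = 2*(n:ℝ) - 2 := by
          have h3 : (2:ℕ) ≤ 2*n := by omega
          push_cast [Nat.cast_sub h3]
          ring
        rw [hcast, he_def]
        field_simp
      linarith only [h1, h2]
    have hXε : (B*p) ^ (m-1) * Y ≤ (B * p * Y ^ (p-1) + ε) ^ (m-1) := by
      have h1 : (B * p * Y ^ (p-1)) ^ (m-1) ≤ (B * p * Y ^ (p-1) + ε) ^ (m-1) :=
        Real.rpow_le_rpow (by positivity) (by linarith only [hε0]) hm0.le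
      have h2 : (B * p * Y ^ (p-1)) ^ (m-1) = (B*p) ^ (m-1) * Y := by
        rw [Real.mul_rpow hBp_pos.le (Real.rpow_nonneg hYpos.le _),
          ← Real.rpow_mul hYpos.le, hpm1, Real.rpow_one]
      linarith only [h1, h2]
    have hc1c0 : (n:ℝ)^2 * (rmin:ℝ) ^ (2*n-2) * ((B*p) ^ (m-1)) * Y
        ≤ (n:ℝ)^2 * sm ^ e * (B * p * Y ^ (p-1) + ε) ^ (m-1) := by
      have hmm := mul_le_mul hsm_rpow hXε
        (mul_nonneg (Real.rpow_nonneg hBp_pos.le _) hYpos.le)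
        (Real.rpow_nonneg hsmpos.le _)
      calc (n:ℝ)^2 * (rmin:ℝ) ^ (2*n-2) * ((B*p) ^ (m-1)) * Y
          = (n:ℝ)^2 * ((rmin:ℝ) ^ (2*n-2) * ((B*p) ^ (m-1) * Y)) := by ring
        _ ≤ (n:ℝ)^2 * (sm ^ e * (B * p * Y ^ (p-1) + ε) ^ (m-1)) :=
            mul_le_mul_of_nonneg_left hmm (by positivity)
        _ = (n:ℝ)^2 * sm ^ e * (B * p * Y ^ (p-1) + ε) ^ (m-1) := by ring
    have hc1nn : 0 ≤ (n:ℝ)^2 * sm ^ e * (B * p * Y ^ (p-1) + ε) ^ (m-1) :=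
      mul_nonneg (mul_nonneg (by positivity) (Real.rpow_nonneg hsmpos.le _))
        (Real.rpow_nonneg (by linarith only [hβpos, hε0]) _)
    have hD2pos : 0 < B * p * (p-1) * Y ^ (p-2) :=
      mul_pos (mul_pos hBp_pos (by linarith only [hp1])) (Real.rpow_pos_of_pos hYpos _)
    have step1 : (n:ℝ)^2 * sm ^ e * (B * p * Y ^ (p-1) + ε) ^ (m-1)
          * deriv (deriv (fun σ => F.weps ε σ tm)) sm
        ≤ (n:ℝ)^2 * sm ^ e * (B * p * Y ^ (p-1) + ε) ^ (m-1)
          * (-(B * p * (p-1) * Y ^ (p-2))) :=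
      mul_le_mul_of_nonneg_left hDss hc1nn
    have step2 : (n:ℝ)^2 * sm ^ e * (B * p * Y ^ (p-1) + ε) ^ (m-1)
          * (-(B * p * (p-1) * Y ^ (p-2)))
        ≤ (n:ℝ)^2 * (rmin:ℝ) ^ (2*n-2) * ((B*p) ^ (m-1)) * Y
          * (-(B * p * (p-1) * Y ^ (p-2))) :=
      mul_le_mul_of_nonpos_right hc1c0 (by linarith only [hD2pos])
    have hYY : Y ^ (p-1) = Y * Y ^ (p-2) := by
      rw [show p - 1 = 1 + (p-2) by ring, Real.rpow_add hYpos, Real.rpow_one]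
    have step3 : (n:ℝ)^2 * (rmin:ℝ) ^ (2*n-2) * ((B*p) ^ (m-1)) * Y
          * (-(B * p * (p-1) * Y ^ (p-2)))
        = -((n:ℝ)^2 * (rmin:ℝ) ^ (2*n-2) * ((B*p) ^ (m-1)) * (p-1)
            * (B * p * Y ^ (p-1))) := by
      rw [hYY]; ring
    have hW := wle ε hε sm hsm0R tm htm
    have step5 : (F.weps ε sm tm - μ * sm) * (B * p * Y ^ (p-1))
        ≤ μ * (R ^ n - rmin ^ n) * (B * p * Y ^ (p-1)) := by
      apply mul_le_mul_of_nonneg_right _ hβpos.le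
      have h1 : μ * rmin ^ n ≤ μ * sm :=
        mul_le_mul_of_nonneg_left (le_trans hrminn_le hsm.1) hμ.le
      linarith only [hW, h1]
    have hfinal : (n:ℝ)^2 * (rmin:ℝ) ^ (2*n-2) * ((B*p) ^ (m-1)) * (p-1)
          * (B * p * Y ^ (p-1))
        ≤ (μ * (R ^ n - rmin ^ n) + θ) * (B * p * Y ^ (p-1)) := by
      linarith only [hDt, hpde, step1, step2, step3, step5]
    have hGle : (n:ℝ)^2 * (rmin:ℝ) ^ (2*n-2) * ((B*p) ^ (m-1)) * (p-1)
        ≤ μ * (R ^ n - rmin ^ n) + θ := le_of_mul_le_mul_right hfinal hβpos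
    have hBpCp : B * p = C * p / lam := by rw [hB_def]; ring
    rw [hBpCp] at hGle
    linarith only [hGrmin, hGle]
  -- conclusion
  refine ⟨T, ⟨hT0, hTT₀⟩, ?_⟩
  have hae := (ae_restrict_iff' measurableSet_Icc).mp F.weps_conv
  filter_upwards [hae] with t ht hmemT s hs
  have htT₀ : t ∈ Icc 0 T₀ := ⟨hmemT.1, le_trans hmemT.2 hTT₀.le⟩
  have hs' : s ∈ Icc (0:ℝ) (R ^ n) := ⟨le_trans hr₀n.le hs.1, hs.2⟩
  have hconv := ht htT₀ s hs'
  have hwV : w s t ≤ V s t :=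
    le_of_tendsto hconv (Eventually.of_forall fun j => key _ (F.epsSeq_mem j) s hs t hmemT)
  constructor
  · intro hslt
    have hy : 0 < r₁ ^ n + θ*t - s := sub_pos.mpr hslt
    have hVeq : V s t = μ * R ^ n - C/lam * (r₁ ^ n + θ*t - s) ^ p := by
      simp only [hV_def, hB_def, max_eq_left hy.le]
    rw [hVeq] at hwV
    exact hwV
  · intro hsge
    have hVeq : V s t = μ * R ^ n := by
      simp only [hV_def, max_eq_right (by linarith : r₁ ^ n + θ*t - s ≤ 0)]
      rw [Real.zero_rpow (ne_of_gt hppos)]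
      ring
    rw [hVeq] at hwV
    exact hwV
end

section
/- Let n ≥ 1 be an integer, m > 1, μ > 0, R > 0, r₁ ∈ (0,R) and C ∈ (0, C_crit(r₁)). Then there exist r_min ∈ (0,r₁), θ_max > 0, κ > 0 and ε₀ ∈ (0,1) with 2κε₀ < μ such that, setting δ(ε) := (εκ(m−1)/(Cm))^{m−1} and η(ε) := −C·δ(ε)^{m/(m−1)} + εκ(Rⁿ − r₁ⁿ + δ(ε)), one has η(ε) ≥ 0 for all ε ∈ (0,ε₀), and the following holds for all ε ∈ (0,ε₀), r₀ ∈ [r_min, r₁) and θ ∈ [0, θ_max]: with ρ(t) := r₁ⁿ − θt, the function u̲ on [r₀ⁿ, Rⁿ]×[0,∞) defined by u̲(s,t) = μRⁿ − η(ε) − C(ρ(t) − s)^{m/(m−1)} for s < ρ(t) − δ(ε) and u̲(s,t) = μRⁿ − εκ(Rⁿ − θt − s) for s ≥ ρ(t) − δ(ε) is continuously differentiable on [r₀ⁿ, Rⁿ]×[0,∞) with ∂_s u̲ ≥ εκ > 0 and, for each fixed t, ∂_s u̲(·,t) is locally Lipschitz on (r₀ⁿ, Rⁿ); moreover, whenever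 r₂ ∈ (r₁, R] satisfies θ ≤ (μ − 2ε₀κ)(Rⁿ − r₂ⁿ), then for all t ∈ [0,∞) and all s ∈ [r₀ⁿ, r₂ⁿ] with s ≠ ρ(t) − δ(ε) one has (P_ε u̲)(s,t) ≤ −εκ(Rⁿ − r₂ⁿ)·∂_s u̲(s,t) ≤ 0. -/
open Set MeasureTheory Filter

lemma profile_hasDerivAt {A B c ek d p : ℝ} (hd : 0 < d) (hp1 : 1 < p)
    (hval : A - c * d ^ p = B - ek * d) (hder : c * p * d ^ (p - 1) = ek) (x : ℝ) :
    HasDerivAt (fun y : ℝ => if d < y then A - c * y ^ p else B - ek * y)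
      (if d < x then -(c * p * x ^ (p - 1)) else -ek) x := by
  have hlin : ∀ z : ℝ, HasDerivAt (fun y : ℝ => B - ek * y) (-ek) z := by
    intro z
    simpa using ((hasDerivAt_id z).const_mul ek).const_sub B
  have hpow : ∀ z : ℝ, 0 < z → HasDerivAt (fun y : ℝ => A - c * y ^ p)
      (-(c * p * z ^ (p - 1))) z := by
    intro z hz
    have h1 : HasDerivAt (fun y : ℝ => y ^ p) (p * z ^ (p - 1)) z :=
      Real.hasDerivAt_rpow_const (Or.inl hz.ne')
    have h2 := (h1.const_mul c).const_sub A
    simpa [mul_assoc] using h2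
  rcases lt_trichotomy x d with hx | hx | hx
  · rw [if_neg (not_lt.2 hx.le)]
    apply (hlin x).congr_of_eventuallyEq
    filter_upwards [Iio_mem_nhds hx] with y hy
    rw [if_neg (not_lt.2 (mem_Iio.1 hy).le)]
  · subst hx
    rw [if_neg (lt_irrefl x)]
    have hright : HasDerivWithinAt
        (fun y : ℝ => if x < y then A - c * y ^ p else B - ek * y) (-ek) (Ici x) x := by
      have h2 : HasDerivWithinAt (fun y : ℝ => A - c * y ^ p) (-ek) (Ici x) x := by
        have := (hpow x hd).hasDerivWithinAt (s := Ici x)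
        rwa [hder] at this
      apply h2.congr
      · intro y hy
        rcases eq_or_lt_of_le (mem_Ici.1 hy) with h | h
        · rw [if_neg (by rw [← h]; exact lt_irrefl x), ← h, hval]
        · rw [if_pos h]
      · rw [if_neg (lt_irrefl x), hval]
    have hleft : HasDerivWithinAt
        (fun y : ℝ => if x < y then A - c * y ^ p else B - ek * y) (-ek) (Iic x) x := by
      apply ((hlin x).hasDerivWithinAt (s := Iic x)).congr
      · intro y hy
        rw [if_neg (not_lt.2 (mem_Iic.1 hy))]
      · rw [if_neg (lt_irrefl x)]
    have := hleft.union hright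
    rw [Iic_union_Ici] at this
    exact hasDerivWithinAt_univ.1 this
  · rw [if_pos hx]
    apply (hpow x (hd.trans hx)).congr_of_eventuallyEq
    filter_upwards [Ioi_mem_nhds hx] with y hy
    rw [if_pos (mem_Ioi.1 hy)]

lemma profile_cont {c ek d p : ℝ} (hp1 : 1 < p) (hder : c * p * d ^ (p - 1) = ek) :
    Continuous (fun x : ℝ => if d < x then -(c * p * x ^ (p - 1)) else -ek) := by
  have h : (fun x : ℝ => if d < x then -(c * p * x ^ (p - 1)) else -ek)
      = fun x : ℝ => if x ≤ d then -ek else -(c * p * x ^ (p - 1)) := by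
    funext x
    rcases le_or_gt x d with h | h
    · rw [if_neg (not_lt.2 h), if_pos h]
    · rw [if_pos h, if_neg (not_le.2 h)]
  rw [h]
  have hc : Continuous fun x : ℝ => x ^ (p - 1) := by
    rw [continuous_iff_continuousAt]
    intro x
    exact Real.continuousAt_rpow_const x (p - 1) (Or.inr (by linarith))
  refine Continuous.if_le continuous_const ((continuous_const.mul hc).neg)
    continuous_id continuous_const ?_
  intro x hx
  rw [hx, hder]

lemma profile_lip {c ek d p M : ℝ} (hd : 0 < d) (hdM : d ≤ M) (hp1 : 1 < p) (hc : 0 ≤ c)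
    (hder : c * p * d ^ (p - 1) = ek) :
    ∃ L : ℝ, 0 ≤ L ∧ ∀ x y : ℝ, x ≤ M → y ≤ M →
      |(if d < y then -(c * p * y ^ (p - 1)) else -ek) -
        (if d < x then -(c * p * x ^ (p - 1)) else -ek)| ≤ L * |y - x| := by
  have hM0 : 0 < M := hd.trans_le hdM
  set g := fun x : ℝ => if d < x then -(c * p * x ^ (p - 1)) else -ek with hg
  set L := c * p * (p - 1) * (d ^ (p - 2) + M ^ (p - 2)) with hL
  have hp0 : 0 < p := by linarith
  have hL0 : 0 ≤ L := by
    have h1 : (0:ℝ) ≤ d ^ (p - 2) := Real.rpow_nonneg hd.le _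
    have h2 : (0:ℝ) ≤ M ^ (p - 2) := Real.rpow_nonneg hM0.le _
    have h5 : (0:ℝ) ≤ c * p * (p - 1) := mul_nonneg (mul_nonneg hc hp0.le) (by linarith)
    rw [hL]; nlinarith
  refine ⟨L, hL0, ?_⟩
  have hmvt : ∀ x y : ℝ, x ∈ Icc d M → y ∈ Icc d M →
      |(-(c * p * y ^ (p - 1))) - (-(c * p * x ^ (p - 1)))| ≤ L * |y - x| := by
    intro x y hx hy
    have hderiv : ∀ z ∈ Icc d M, HasDerivWithinAt (fun w : ℝ => -(c * p * w ^ (p - 1)))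
        (-(c * p * ((p - 1) * z ^ (p - 2)))) (Icc d M) z := by
      intro z hz
      have h1 : HasDerivAt (fun w : ℝ => w ^ (p - 1)) ((p - 1) * z ^ (p - 1 - 1)) z :=
        Real.hasDerivAt_rpow_const (Or.inl (hd.trans_le hz.1).ne')
      have h2 := (h1.const_mul (c * p)).neg
      have he : p - 1 - 1 = p - 2 := by ring
      rw [he] at h2
      exact h2.hasDerivWithinAt
    have hbound : ∀ z ∈ Icc d M, ‖-(c * p * ((p - 1) * z ^ (p - 2)))‖ ≤ L := by
      intro z hz
      have hz0 : (0:ℝ) < z := hd.trans_le hz.1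
      have hb : z ^ (p - 2) ≤ d ^ (p - 2) + M ^ (p - 2) := by
        rcases le_or_gt p 2 with h2 | h2
        · have h3 : z ^ (p - 2) ≤ d ^ (p - 2) :=
            Real.rpow_le_rpow_of_nonpos hd hz.1 (by linarith)
          have h4 : (0:ℝ) ≤ M ^ (p - 2) := Real.rpow_nonneg hM0.le _
          linarith
        · have h3 : z ^ (p - 2) ≤ M ^ (p - 2) := Real.rpow_le_rpow hz0.le hz.2 (by linarith)
          have h4 : (0:ℝ) ≤ d ^ (p - 2) := Real.rpow_nonneg hd.le _
          linarith
      have hz2 : (0:ℝ) ≤ z ^ (p - 2) := Real.rpow_nonneg hz0.le _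
      have h0 : (0:ℝ) ≤ c * p * (p - 1) := mul_nonneg (mul_nonneg hc hp0.le) (by linarith)
      have hnn : (0:ℝ) ≤ c * p * ((p - 1) * z ^ (p - 2)) := by
        have := mul_nonneg h0 hz2; nlinarith
      rw [norm_neg, Real.norm_eq_abs, abs_of_nonneg hnn, hL]
      nlinarith [mul_le_mul_of_nonneg_left hb h0]
    have := Convex.norm_image_sub_le_of_norm_hasDerivWithin_le hderiv hbound
      (convex_Icc d M) hx hy
    simpa [Real.norm_eq_abs] using this
  have key : ∀ x y : ℝ, x ≤ y → y ≤ M → |g y - g x| ≤ L * (y - x) := by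
    intro x y hxy hyM
    by_cases hyd : y ≤ d
    · have he : g y = g x := by
        simp only [hg, if_neg (not_lt.2 hyd), if_neg (not_lt.2 (hxy.trans hyd))]
      rw [he, sub_self, abs_zero]
      exact mul_nonneg hL0 (by linarith)
    push_neg at hyd
    have hgy : g y = -(c * p * y ^ (p - 1)) := if_pos hyd
    by_cases hxd : x ≤ d
    · have hgx : g x = -ek := if_neg (not_lt.2 hxd)
      have h1 := hmvt d y ⟨le_refl d, hdM⟩ ⟨hyd.le, hyM⟩
      rw [hgx, hgy, ← hder]
      calc |(-(c * p * y ^ (p - 1))) - (-(c * p * d ^ (p - 1)))| ≤ L * |y - d| := h1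
        _ = L * (y - d) := by rw [abs_of_nonneg (by linarith)]
        _ ≤ L * (y - x) := mul_le_mul_of_nonneg_left (by linarith) hL0
    · push_neg at hxd
      have hgx : g x = -(c * p * x ^ (p - 1)) := if_pos hxd
      rw [hgx, hgy]
      have h1 := hmvt x y ⟨hxd.le, hxy.trans hyM⟩ ⟨(hxd.trans_le hxy).le, hyM⟩
      calc |(-(c * p * y ^ (p - 1))) - (-(c * p * x ^ (p - 1)))| ≤ L * |y - x| := h1
        _ = L * (y - x) := by rw [abs_of_nonneg (by linarith)]
  intro x y hxM hyM
  rcases le_total x y with h | h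
  · rw [abs_of_nonneg (by linarith : (0:ℝ) ≤ y - x)]
    exact key x y h hyM
  · rw [abs_sub_comm, abs_sub_comm y x, abs_of_nonneg (by linarith : (0:ℝ) ≤ x - y)]
    exact key y x h hxM

set_option maxHeartbeats 1000000 in
/-- **Lemma 4.2 (construction of subsolutions, shrinking case).** For `C ∈ (0, C_crit(r₁))`
there are `r_min, θ_max, κ, ε₀` with `2κε₀ < μ` such that `η(ε) ≥ 0` for `ε ∈ (0,ε₀)` and the
piecewise comparison function `u̲` is `C¹` with `∂_s u̲ ≥ εκ`, has locally Lipschitz spatial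
derivative, and satisfies `P_ε u̲ ≤ −εκ(Rⁿ−r₂ⁿ)∂_s u̲ ≤ 0` away from the matching point. -/
theorem subsolution_construction
    (n : ℕ) (hn : 1 ≤ n) (m μ R : ℝ) (hm : 1 < m) (hμ : 0 < μ) (hR : 0 < R)
    (r₁ : ℝ) (hr₁ : r₁ ∈ Ioo 0 R) (C : ℝ) (hC : C ∈ Ioo 0 (Ccrit n R m μ r₁)) :
    ∃ rmin ∈ Ioo (0:ℝ) r₁, ∃ θmax > (0:ℝ), ∃ κ > (0:ℝ), ∃ ε₀ ∈ Ioo (0:ℝ) 1,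
      2 * κ * ε₀ < μ ∧
      (∀ ε ∈ Ioo (0:ℝ) ε₀,
        0 ≤ -C * ((ε * κ * (m - 1) / (C * m)) ^ (m - 1)) ^ (m / (m - 1))
            + ε * κ * (R ^ n - r₁ ^ n + (ε * κ * (m - 1) / (C * m)) ^ (m - 1))) ∧
      (∀ ε ∈ Ioo (0:ℝ) ε₀, ∀ r₀ ∈ Ico rmin r₁, ∀ θ ∈ Icc (0:ℝ) θmax,
        ∀ ulw : ℝ → ℝ → ℝ,
          (∀ s t : ℝ,
            ulw s t =
              if s < r₁ ^ n - θ * t - (ε * κ * (m - 1) / (C * m)) ^ (m - 1) then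
                μ * R ^ n
                  - (-C * ((ε * κ * (m - 1) / (C * m)) ^ (m - 1)) ^ (m / (m - 1))
                      + ε * κ * (R ^ n - r₁ ^ n + (ε * κ * (m - 1) / (C * m)) ^ (m - 1)))
                  - C * (r₁ ^ n - θ * t - s) ^ (m / (m - 1))
              else μ * R ^ n - ε * κ * (R ^ n - θ * t - s)) →
          (∀ s ∈ Icc (r₀ ^ n) (R ^ n), ∀ t ∈ Ici (0:ℝ),
              DifferentiableAt ℝ (fun σ => ulw σ t) s ∧
              DifferentiableAt ℝ (fun τ => ulw s τ) t ∧
              ε * κ ≤ deriv (fun σ => ulw σ t) s) ∧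
          ContinuousOn (fun p : ℝ × ℝ => deriv (fun σ => ulw σ p.2) p.1)
            (Icc (r₀ ^ n) (R ^ n) ×ˢ Ici 0) ∧
          ContinuousOn (fun p : ℝ × ℝ => deriv (fun τ => ulw p.1 τ) p.2)
            (Icc (r₀ ^ n) (R ^ n) ×ˢ Ici 0) ∧
          (∀ t ∈ Ici (0:ℝ), ∀ K ⊆ Ioo (r₀ ^ n) (R ^ n), IsCompact K →
            ∃ L : NNReal, LipschitzOnWith L (deriv (fun σ => ulw σ t)) K) ∧
          (∀ r₂ ∈ Ioc r₁ R, θ ≤ (μ - 2 * ε₀ * κ) * (R ^ n - r₂ ^ n) →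
            ∀ t ∈ Ici (0:ℝ), ∀ s ∈ Icc (r₀ ^ n) (r₂ ^ n),
              s ≠ r₁ ^ n - θ * t - (ε * κ * (m - 1) / (C * m)) ^ (m - 1) →
              Peps n m μ ε ulw s t
                ≤ -(ε * κ * (R ^ n - r₂ ^ n)) * deriv (fun σ => ulw σ t) s ∧
              -(ε * κ * (R ^ n - r₂ ^ n)) * deriv (fun σ => ulw σ t) s ≤ 0)) := by
  obtain ⟨hr10, hr1R⟩ := hr₁
  obtain ⟨hC0, hCc⟩ := hC
  have hm1 : (0:ℝ) < m - 1 := by linarith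
  have hm0 : (0:ℝ) < m := by linarith
  have hn0 : (0:ℝ) < (n:ℝ) := by exact_mod_cast Nat.pos_of_ne_zero (by omega)
  set p := m / (m - 1) with hpdef
  have hp1 : 1 < p := by
    rw [hpdef, lt_div_iff₀ hm1]; linarith
  have hp0 : (0:ℝ) < p := by linarith
  have hpm : p - 1 = 1 / (m - 1) := by
    rw [hpdef]; field_simp; ring
  set a := R ^ n - r₁ ^ n with hadef
  have ha : 0 < a := by
    have := pow_lt_pow_left₀ hr1R hr10.le (by omega : n ≠ 0)
    rw [hadef]; linarith
  have hCp : 0 < C * p := mul_pos hC0 hp0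
  have hr1p : (0:ℝ) < r₁ ^ (2 * n - 2) := pow_pos hr10 _
  set DD := (n:ℝ) ^ 2 * r₁ ^ (2 * n - 2) * (C * p) ^ (m - 1) / (m - 1) with hDDdef
  have hDD0 : 0 < DD := by
    rw [hDDdef]
    have := Real.rpow_pos_of_pos hCp (m - 1)
    positivity
  -- D < μ a from C < Ccrit
  have hDa : DD < μ * a := by
    have hQ0 : 0 < μ * a * (m-1) / (r₁ ^ (2*n-2) * (n:ℝ)^2) :=
      div_pos (mul_pos (mul_pos hμ ha) hm1) (mul_pos hr1p (pow_pos hn0 2))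
    have hCeq : Ccrit n R m μ r₁
        = (m-1)/m * (μ * a * (m-1) / (r₁ ^ (2*n-2) * (n:ℝ)^2)) ^ (1/(m-1)) := by
      rw [hadef]; rfl
    have h1 : C * p < (μ * a * (m-1) / (r₁ ^ (2*n-2) * (n:ℝ)^2)) ^ (1/(m-1)) := by
      have h2 := mul_lt_mul_of_pos_right hCc hp0
      have h3 : Ccrit n R m μ r₁ * p
          = (μ * a * (m-1) / (r₁ ^ (2*n-2) * (n:ℝ)^2)) ^ (1/(m-1)) := by
        rw [hCeq, hpdef]; field_simp
      linarith
    have h4 : (C*p)^(m-1) < μ * a * (m-1) / (r₁ ^ (2*n-2) * (n:ℝ)^2) := by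
      have h5 := Real.rpow_lt_rpow hCp.le h1 hm1
      rwa [← Real.rpow_mul hQ0.le, one_div, inv_mul_cancel₀ (ne_of_gt hm1),
        Real.rpow_one] at h5
    rw [hDDdef, div_lt_iff₀ hm1]
    rw [lt_div_iff₀ (mul_pos hr1p (pow_pos hn0 2))] at h4
    nlinarith [h4]
  set γ := μ * a - DD with hγdef
  have hγ0 : 0 < γ := by rw [hγdef]; linarith
  -- choice of κ
  obtain ⟨κ, hκfac, hκ1⟩ : ∃ κ : ℝ, (1 + 1/κ) ^ (m-1) ≤ 1 + γ / (4 * DD) ∧ 1 ≤ κ := by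
    have h1 : Tendsto (fun k : ℝ => 1 + 1/k) atTop (nhds 1) := by
      simpa [one_div] using (tendsto_const_nhds (x := (1:ℝ))).add tendsto_inv_atTop_zero
    have hc := (Real.continuousAt_rpow_const 1 (m-1) (Or.inl one_ne_zero)).tendsto
    have h2 := hc.comp h1
    simp only [Function.comp, Real.one_rpow] at h2
    have hev := h2.eventually (eventually_le_nhds
      (by nlinarith [div_pos hγ0 (by linarith : (0:ℝ) < 4 * DD)] : (1:ℝ) < 1 + γ / (4 * DD)))
    exact (hev.and (eventually_ge_atTop 1)).exists
  have hκ0 : 0 < κ := lt_of_lt_of_le one_pos hκ1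
  have hκD : (1 + 1/κ) ^ (m-1) * DD ≤ DD + γ/4 := by
    have h1 := mul_le_mul_of_nonneg_right hκfac hDD0.le
    have h2 : (1 + γ / (4 * DD)) * DD = DD + γ/4 := by field_simp
    linarith
  -- threshold for δ(ε) ≤ a
  obtain ⟨ε₁, hε₁0, hε₁⟩ : ∃ ε₁ > (0:ℝ), ∀ ⦃e : ℝ⦄, dist e 0 < ε₁ →
      (e * κ * (m-1) / (C*m)) ^ (m-1) ≤ a := by
    have hf : Tendsto (fun e : ℝ => e * κ * (m-1)/(C*m)) (nhds 0) (nhds 0) := by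
      have h2 : ContinuousAt (fun e : ℝ => e * κ * (m-1)/(C*m)) 0 := by fun_prop
      simpa using h2.tendsto
    have hg : Tendsto (fun x : ℝ => x ^ (m-1)) (nhds 0) (nhds (0:ℝ)) := by
      have := (Real.continuousAt_rpow_const 0 (m-1) (Or.inr (by linarith))).tendsto
      rwa [Real.zero_rpow (by linarith : m - 1 ≠ 0)] at this
    have h3 : Tendsto (fun e : ℝ => (e * κ * (m-1)/(C*m)) ^ (m-1)) (nhds 0) (nhds 0) :=
      hg.comp hf
    have hev := h3.eventually (eventually_le_nhds ha)
    exact Metric.eventually_nhds_iff.1 hev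
  -- choice of rmin
  obtain ⟨rmin, hrβ, hrmin_mem⟩ : ∃ r : ℝ, C * (r₁ ^ n - r ^ n) ^ p ≤ γ/8 ∧ r ∈ Ioo 0 r₁ := by
    have hf : Tendsto (fun r : ℝ => r₁ ^ n - r ^ n) (nhds r₁) (nhds 0) := by
      have h2 : ContinuousAt (fun r : ℝ => r₁ ^ n - r ^ n) r₁ := by fun_prop
      simpa using h2.tendsto
    have hg : Tendsto (fun x : ℝ => C * x ^ p) (nhds 0) (nhds (0:ℝ)) := by
      have h4 := (Real.continuousAt_rpow_const 0 p (Or.inr hp0.le)).tendsto.const_mul C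
      simp only [Real.zero_rpow (ne_of_gt hp0), mul_zero] at h4
      exact h4
    have h3 : Tendsto (fun r : ℝ => C * (r₁ ^ n - r ^ n) ^ p) (nhds r₁) (nhds 0) :=
      hg.comp hf
    have hev : ∀ᶠ r in nhdsWithin r₁ (Iio r₁), C * (r₁ ^ n - r ^ n) ^ p ≤ γ/8 :=
      (h3.eventually (eventually_le_nhds (by linarith : (0:ℝ) < γ/8))).filter_mono
        nhdsWithin_le_nhds
    have hmem : ∀ᶠ r in nhdsWithin r₁ (Iio r₁), r ∈ Ioo 0 r₁ :=
      eventually_of_mem (Ioo_mem_nhdsLT_of_mem ⟨hr10, le_refl r₁⟩) (fun r hr => hr)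
    exact (hev.and hmem).exists
  -- choice of ε₀
  set ε₀ := min (min (ε₁/2) (1/2)) (min (μ/(4*κ)) (γ/(16*κ*(a+1)))) with hε₀def
  have hε₀0 : 0 < ε₀ := by
    refine lt_min (lt_min (by linarith) (by norm_num)) (lt_min ?_ ?_)
    · positivity
    · have : (0:ℝ) < 16*κ*(a+1) := by nlinarith
      positivity
  have hε₀1 : ε₀ < 1 := lt_of_le_of_lt ((min_le_left _ _).trans (min_le_right _ _)) (by norm_num)
  have hε₀μ : ε₀ ≤ μ/(4*κ) := (min_le_right _ _).trans (min_le_left _ _)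
  have hε₀γ : ε₀ ≤ γ/(16*κ*(a+1)) := (min_le_right _ _).trans (min_le_right _ _)
  have hε₀ε₁ : ε₀ ≤ ε₁/2 := (min_le_left _ _).trans (min_le_left _ _)
  have h2κε₀ : 2 * κ * ε₀ < μ := by
    have h1 : 2 * κ * ε₀ ≤ 2 * κ * (μ/(4*κ)) :=
      mul_le_mul_of_nonneg_left hε₀μ (by linarith)
    have h2 : 2 * κ * (μ/(4*κ)) = μ/2 := by field_simp; ring
    linarith
  have hε₀κγ : ε₀ * κ * (a+1) * 16 ≤ γ := by
    have h16 : (0:ℝ) < 16*κ*(a+1) := by nlinarith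
    rw [le_div_iff₀ h16] at hε₀γ
    nlinarith
  refine ⟨rmin, hrmin_mem, γ/8, by linarith, κ, hκ0, ε₀, ⟨hε₀0, hε₀1⟩, h2κε₀, ?_, ?_⟩
  · -- η(ε) ≥ 0
    intro ε ⟨hε0, hεε₀⟩
    have hek0 : 0 < ε * κ := mul_pos hε0 hκ0
    have hb0 : 0 < ε*κ*(m-1)/(C*m) := div_pos (mul_pos hek0 hm1) (mul_pos hC0 hm0)
    set b := ε*κ*(m-1)/(C*m) with hbdef
    have hd0 : 0 < b^(m-1) := Real.rpow_pos_of_pos hb0 _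
    have hdp : (b^(m-1))^p = b * b^(m-1) := by
      rw [← Real.rpow_mul hb0.le]
      rw [show (m-1)*p = m by rw [hpdef]; field_simp]
      have h1 : b^m = b^(1+(m-1)) := by norm_num
      rw [h1, Real.rpow_add hb0, Real.rpow_one]
    rw [hdp]
    have hCb : C * b = ε*κ*(m-1)/m := by rw [hbdef]; field_simp
    have key : C*b*(b^(m-1)) ≤ ε*κ*(b^(m-1)) := by
      rw [hCb]
      apply mul_le_mul_of_nonneg_right _ hd0.le
      rw [div_le_iff₀ hm0]
      nlinarith
    nlinarith [mul_nonneg (mul_nonneg hε0.le hκ0.le) ha.le, key]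
  · -- main part
    intro ε ⟨hε0, hεε₀⟩ r₀ hr₀ θ hθ ulw hul
    have hek0 : 0 < ε * κ := mul_pos hε0 hκ0
    have hb0 : 0 < ε*κ*(m-1)/(C*m) := div_pos (mul_pos hek0 hm1) (mul_pos hC0 hm0)
    set b := ε*κ*(m-1)/(C*m) with hbdef
    set d := b^(m-1) with hddef
    have hd0 : 0 < d := by rw [hddef]; exact Real.rpow_pos_of_pos hb0 _
    have hδa : d ≤ a := by
      rw [hddef, hbdef]
      exact hε₁ (by rw [Real.dist_eq, sub_zero, abs_of_pos hε0]; linarith)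
    have hbp1 : d^(p-1) = b := by
      rw [hddef, ← Real.rpow_mul hb0.le, show (m-1)*(p-1) = 1 by rw [hpm]; field_simp,
        Real.rpow_one]
    have hdval : C * p * d^(p-1) = ε*κ := by
      rw [hbp1, hbdef, hpdef]; field_simp
    set A := μ*R^n - (-C * d^p + ε*κ*(a + d)) with hAdef
    set B := μ*R^n - ε*κ*a with hBdef
    have hval : A - C * d^p = B - ε*κ*d := by rw [hAdef, hBdef]; ring
    set F := fun y : ℝ => if d < y then A - C*y^p else B - ε*κ*y with hFdef
    set g := fun y : ℝ => if d < y then -(C*p*y^(p-1)) else -(ε*κ) with hgdef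
    have hF : ∀ x : ℝ, HasDerivAt F (g x) x := fun x =>
      profile_hasDerivAt hd0 hp1 hval hdval x
    have hulF : ∀ s t : ℝ, ulw s t = F (r₁^n - θ*t - s) := by
      intro s t
      rw [hul s t]
      simp only [hFdef]
      by_cases h : d < r₁^n - θ*t - s
      · rw [if_pos h, if_pos (by linarith)]
      · rw [if_neg h, if_neg (by intro hc; exact h (by linarith)), hBdef, hadef]; ring
    have hS : ∀ s t : ℝ, HasDerivAt (fun σ => ulw σ t) (-(g (r₁^n - θ*t - s))) s := by
      intro s t
      have hin : HasDerivAt (fun σ : ℝ => r₁^n - θ*t - σ) (-1) s := by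
        simpa using (hasDerivAt_id s).const_sub (r₁^n - θ*t)
      have h2 := (hF (r₁^n - θ*t - s)).comp s hin
      have h3 : (fun σ : ℝ => ulw σ t) = F ∘ (fun σ : ℝ => r₁^n - θ*t - σ) :=
        funext fun σ => hulF σ t
      rw [h3]
      exact h2.congr_deriv (by ring)
    have hT2 : ∀ s t : ℝ, HasDerivAt (fun τ => ulw s τ) (g (r₁^n - θ*t - s) * (-θ)) t := by
      intro s t
      have hin : HasDerivAt (fun τ : ℝ => r₁^n - θ*τ - s) (-θ) t := by
        have h0 : HasDerivAt (fun τ : ℝ => θ*τ) θ t := by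
          simpa using (hasDerivAt_id t).const_mul θ
        exact (h0.const_sub (r₁^n)).sub_const s
      have h2 := (hF (r₁^n - θ*t - s)).comp t hin
      have h3 : (fun τ : ℝ => ulw s τ) = F ∘ (fun τ : ℝ => r₁^n - θ*τ - s) :=
        funext fun τ => hulF s τ
      rw [h3]; exact h2
    have hderS : ∀ s t : ℝ, deriv (fun σ => ulw σ t) s = -(g (r₁^n - θ*t - s)) :=
      fun s t => (hS s t).deriv
    have hderT : ∀ s t : ℝ, deriv (fun τ => ulw s τ) t = g (r₁^n - θ*t - s) * (-θ) :=
      fun s t => (hT2 s t).deriv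
    have hgub : ∀ x : ℝ, ε*κ ≤ -(g x) := by
      intro x
      simp only [hgdef]
      by_cases h : d < x
      · simp only [if_pos h, neg_neg]
        rw [← hdval]
        have hx1 : d^(p-1) ≤ x^(p-1) :=
          Real.rpow_le_rpow hd0.le h.le (by rw [hpm]; positivity)
        exact mul_le_mul_of_nonneg_left hx1 hCp.le
      · simp only [if_neg h, neg_neg, le_refl]
    have hgcont : Continuous g := by rw [hgdef]; exact profile_cont hp1 hdval
    have hr₀0 : 0 < r₀ := lt_of_lt_of_le hrmin_mem.1 hr₀.1
    refine ⟨?_, ?_, ?_, ?_, ?_⟩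
    · intro s hs t ht
      exact ⟨(hS s t).differentiableAt, (hT2 s t).differentiableAt,
        by rw [hderS]; exact hgub _⟩
    · have hfun : (fun q : ℝ×ℝ => deriv (fun σ => ulw σ q.2) q.1)
          = fun q : ℝ×ℝ => -(g (r₁^n - θ*q.2 - q.1)) := funext fun q => hderS q.1 q.2
      rw [hfun]
      exact ((hgcont.comp (by fun_prop)).neg).continuousOn
    · have hfun : (fun q : ℝ×ℝ => deriv (fun τ => ulw q.1 τ) q.2)
          = fun q : ℝ×ℝ => g (r₁^n - θ*q.2 - q.1) * (-θ) := funext fun q => hderT q.1 q.2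
      rw [hfun]
      exact ((hgcont.comp (by fun_prop)).mul continuous_const).continuousOn
    · -- local Lipschitz continuity of the spatial derivative
      intro t ht K hK _
      obtain ⟨L, hL0, hLip⟩ := profile_lip (M := max d (r₁^n)) hd0 (le_max_left _ _)
        hp1 hC0.le hdval
      have hgLip : ∀ x y : ℝ, x ≤ max d (r₁^n) → y ≤ max d (r₁^n) →
          |g y - g x| ≤ L * |y - x| := by
        intro x y hx hy
        simp only [hgdef]
        exact hLip x y hx hy
      refine ⟨(⟨L, hL0⟩ : NNReal), ?_⟩
      apply LipschitzOnWith.of_dist_le_mul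
      intro x hx y hy
      have hx' := hK hx
      have hy' := hK hy
      have hr₀n : (0:ℝ) < r₀^n := pow_pos hr₀0 n
      have hθt : 0 ≤ θ*t := mul_nonneg hθ.1 ht
      have hbx : r₁^n - θ*t - x ≤ max d (r₁^n) := le_max_of_le_right (by linarith [hx'.1])
      have hby : r₁^n - θ*t - y ≤ max d (r₁^n) := le_max_of_le_right (by linarith [hy'.1])
      have h1 := hgLip _ _ hbx hby
      rw [hderS x t, hderS y t, Real.dist_eq, Real.dist_eq]
      show |-(g (r₁^n - θ*t - x)) - -(g (r₁^n - θ*t - y))| ≤ L * |x - y|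
      rw [show -(g (r₁^n - θ*t - x)) - -(g (r₁^n - θ*t - y))
          = g (r₁^n - θ*t - y) - g (r₁^n - θ*t - x) from by ring]
      calc |g (r₁^n - θ*t - y) - g (r₁^n - θ*t - x)|
          ≤ L * |(r₁^n - θ*t - y) - (r₁^n - θ*t - x)| := h1
        _ = L * |x - y| := by rw [show (r₁^n - θ*t - y) - (r₁^n - θ*t - x) = x - y from by
              ring]
    · -- the differential inequality
      intro r₂ hr₂ hθ₂ t ht s hs hsne
      clear_value p a DD γ ε₀ b d A B F g
      have hθt : 0 ≤ θ*t := mul_nonneg hθ.1 ht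
      have hr₂0 : 0 < r₂ := hr10.trans hr₂.1
      have hr₂R : r₂^n ≤ R^n := pow_le_pow_left₀ hr₂0.le hr₂.2 n
      have hr₁r₂ : r₁^n ≤ r₂^n := pow_le_pow_left₀ hr10.le hr₂.1.le n
      have hrmin_r₀ : rmin^n ≤ r₀^n := pow_le_pow_left₀ hrmin_mem.1.le hr₀.1 n
      have hs0 : 0 < s := lt_of_lt_of_le (pow_pos hr₀0 n) hs.1
      have hv0 : (0:ℝ) ≤ R^n - r₂^n := by linarith
      have hva : R^n - r₂^n ≤ a := by rw [hadef]; linarith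
      have hekub : ε*κ ≤ ε₀*κ := mul_le_mul_of_nonneg_right hεε₀.le hκ0.le
      have hXne : r₁^n - θ*t - s ≠ d := fun h => hsne (by linarith)
      have hfun1 : deriv (fun σ => ulw σ t) = fun σ => -(g (r₁^n - θ*t - σ)) :=
        funext fun σ => hderS σ t
      have hslack : ε*κ*(R^n - r₂^n) ≤ γ/16 := by
        have h1 : ε*κ*(R^n - r₂^n) ≤ ε₀*κ*a :=
          mul_le_mul hekub hva hv0 (mul_nonneg hε₀0.le hκ0.le)
        linarith [h1, hε₀κγ, mul_pos hε₀0 hκ0]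
      rcases lt_or_gt_of_ne hXne with hX | hX
      · -- region where the profile is affine
        have hgX : g (r₁^n - θ*t - s) = -(ε*κ) := by
          rw [hgdef]; exact if_neg (not_lt.2 hX.le)
        have hFX : F (r₁^n - θ*t - s) = B - ε*κ*(r₁^n - θ*t - s) := by
          rw [hFdef]; exact if_neg (not_lt.2 hX.le)
        have h2nd : deriv (deriv (fun σ => ulw σ t)) s = 0 := by
          rw [hfun1]
          have hev : (fun σ : ℝ => -(g (r₁^n - θ*t - σ))) =ᶠ[nhds s] (fun _ => ε*κ) := by
            have hct : Continuous fun σ : ℝ => r₁^n - θ*t - σ := by fun_prop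
            have hopen := (hct.continuousAt (x := s)).eventually (eventually_lt_nhds hX)
            filter_upwards [hopen] with σ hσ
            simp only [hgdef, if_neg (not_lt.2 hσ.le), neg_neg]
          rw [hev.deriv_eq, deriv_const]
        simp only [Peps]
        rw [hderT s t, hderS s t, hulF s t, h2nd, hgX, hFX]
        constructor
        · have h1 : θ ≤ (μ - 2*(ε*κ))*(R^n - r₂^n) :=
            le_trans hθ₂ (mul_le_mul_of_nonneg_right (by linarith) hv0)
          have h2 : (μ - ε*κ)*(R^n - r₂^n) ≤ (μ - ε*κ)*(R^n - s) :=
            mul_le_mul_of_nonneg_left (by linarith [hs.2]) (by linarith)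
          have hbr : θ - μ*(R^n - s) + ε*κ*(R^n - θ*t - s) + ε*κ*(R^n - r₂^n) ≤ 0 := by
            linarith [h1, h2, mul_nonneg hek0.le hθt]
          rw [hBdef, hadef]
          linarith [mul_le_mul_of_nonneg_left hbr hek0.le]
        · linarith [mul_nonneg (mul_nonneg hek0.le hv0) hek0.le]
      · -- region where the profile is a power function
        have hgX : g (r₁^n - θ*t - s) = -(C*p*(r₁^n - θ*t - s)^(p-1)) := by
          rw [hgdef]; exact if_pos hX
        have hFX : F (r₁^n - θ*t - s) = A - C*(r₁^n - θ*t - s)^p := by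
          rw [hFdef]; exact if_pos hX
        have hX0 : (0:ℝ) < r₁^n - θ*t - s := hd0.trans hX
        have h2nd : deriv (deriv (fun σ => ulw σ t)) s
            = -(C*p*((p-1)*(r₁^n - θ*t - s)^(p-2))) := by
          rw [hfun1]
          have hev : (fun σ : ℝ => -(g (r₁^n - θ*t - σ)))
              =ᶠ[nhds s] (fun σ : ℝ => C*p*(r₁^n - θ*t - σ)^(p-1)) := by
            have hct : Continuous fun σ : ℝ => r₁^n - θ*t - σ := by fun_prop
            have hopen := (hct.continuousAt (x := s)).eventually (eventually_gt_nhds hX)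
            filter_upwards [hopen] with σ hσ
            simp only [hgdef, if_pos hσ, neg_neg]
          rw [hev.deriv_eq]
          have hder2 : HasDerivAt (fun σ : ℝ => C*p*(r₁^n - θ*t - σ)^(p-1))
              (-(C*p*((p-1)*(r₁^n - θ*t - s)^(p-2)))) s := by
            have hin : HasDerivAt (fun σ : ℝ => r₁^n - θ*t - σ) (-1) s := by
              simpa using (hasDerivAt_id s).const_sub (r₁^n - θ*t)
            have hout : HasDerivAt (fun y : ℝ => y^(p-1))
                ((p-1)*(r₁^n - θ*t - s)^(p-1-1)) (r₁^n - θ*t - s) :=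
              Real.hasDerivAt_rpow_const (Or.inl hX0.ne')
            have h5 := (hout.comp s hin).const_mul (C*p)
            simp only [Function.comp] at h5
            rw [show p-1-1 = p-2 from by ring] at h5
            exact h5.congr_deriv (by ring)
          rw [hder2.deriv]
        simp only [Peps]
        rw [hderT s t, hderS s t, hulF s t, h2nd, hgX, hFX]
        simp only [neg_neg]
        set X := r₁^n - θ*t - s with hXdef
        have hXp1 : (0:ℝ) < X^(p-1) := Real.rpow_pos_of_pos hX0 _
        have hus0 : 0 < C*p*X^(p-1) := mul_pos hCp hXp1
        have huslb : ε*κ ≤ C*p*X^(p-1) := by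
          rw [← hdval]
          exact mul_le_mul_of_nonneg_left
            (Real.rpow_le_rpow hd0.le hX.le (by rw [hpm]; positivity)) hCp.le
        have hXub : X ≤ r₁^n - rmin^n := by
          rw [hXdef]; linarith [hs.1]
        have hsr₁ : s ≤ r₁^n := by
          have := hXdef
          linarith [hX0]
        have hεus : C*p*X^(p-1) + ε ≤ (1+1/κ) * (C*p*X^(p-1)) := by
          have h7 : ε ≤ (C*p*X^(p-1))/κ := (le_div_iff₀ hκ0).2 (by linarith [huslb])
          have h8 : (1+1/κ) * (C*p*X^(p-1)) = C*p*X^(p-1) + (C*p*X^(p-1))/κ := by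
            field_simp
          linarith
        have hpowb : (C*p*X^(p-1) + ε)^(m-1) ≤ (1+1/κ)^(m-1) * ((C*p)^(m-1) * X) := by
          have h9 : (C*p*X^(p-1) + ε)^(m-1) ≤ ((1+1/κ) * (C*p*X^(p-1)))^(m-1) :=
            Real.rpow_le_rpow (by linarith) hεus hm1.le
          have h10 : ((1+1/κ) * (C*p*X^(p-1)))^(m-1)
              = (1+1/κ)^(m-1) * ((C*p)^(m-1) * (X^(p-1))^(m-1)) := by
            rw [Real.mul_rpow (by positivity) hus0.le, Real.mul_rpow hCp.le hXp1.le]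
          have h11 : (X^(p-1))^(m-1) = X := by
            rw [← Real.rpow_mul hX0.le, show (p-1)*(m-1) = 1 from by rw [hpm]; field_simp,
              Real.rpow_one]
          calc (C*p*X^(p-1) + ε)^(m-1) ≤ ((1+1/κ) * (C*p*X^(p-1)))^(m-1) := h9
            _ = (1+1/κ)^(m-1) * ((C*p)^(m-1) * X) := by rw [h10, h11]
        have hXX : X^(p-2) * X = X^(p-1) := by
          have h12 := (Real.rpow_add hX0 (p-2) 1).symm
          rw [Real.rpow_one] at h12
          rw [h12, show p-2+1 = p-1 from by ring]
        have he0 : (0:ℝ) ≤ 2 - 2/(n:ℝ) := by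
          have := div_le_self (by norm_num : (0:ℝ) ≤ 2) (by exact_mod_cast hn : (1:ℝ) ≤ (n:ℝ))
          linarith
        have hsenn : (0:ℝ) ≤ s ^ ((2:ℝ) - 2/(n:ℝ)) := Real.rpow_nonneg hs0.le _
        have hseub : s ^ ((2:ℝ) - 2/(n:ℝ)) ≤ r₁^(2*n-2) := by
          have hcast : (n:ℝ)*((2:ℝ) - 2/(n:ℝ)) = ((2*n-2 : ℕ) : ℝ) := by
            rw [Nat.cast_sub (by omega : 2 ≤ 2*n)]
            push_cast
            field_simp
          calc s ^ ((2:ℝ) - 2/(n:ℝ)) ≤ (r₁^n) ^ ((2:ℝ) - 2/(n:ℝ)) :=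
              Real.rpow_le_rpow hs0.le hsr₁ he0
            _ = r₁^(2*n-2) := by
              rw [← Real.rpow_natCast r₁ n, ← Real.rpow_mul hr10.le, hcast,
                Real.rpow_natCast]
        have hW : (C*p*X^(p-1) + ε)^(m-1) * X^(p-2)
            ≤ (1+1/κ)^(m-1) * (C*p)^(m-1) * X^(p-1) := by
          have h13 := mul_le_mul_of_nonneg_right hpowb (Real.rpow_nonneg hX0.le (p-2))
          calc (C*p*X^(p-1) + ε)^(m-1) * X^(p-2)
              ≤ (1+1/κ)^(m-1) * ((C*p)^(m-1) * X) * X^(p-2) := h13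
            _ = (1+1/κ)^(m-1) * (C*p)^(m-1) * (X^(p-2) * X) := by ring
            _ = (1+1/κ)^(m-1) * (C*p)^(m-1) * X^(p-1) := by rw [hXX]
        have hCpp : (0:ℝ) ≤ C*p*(p-1) := mul_nonneg hCp.le (by linarith)
        have hκnn : (0:ℝ) ≤ (1+1/κ)^(m-1) := Real.rpow_nonneg (by positivity) _
        have hCpm : (0:ℝ) ≤ (C*p)^(m-1) := Real.rpow_nonneg hCp.le _
        have hTb : (n:ℝ)^2 * s ^ ((2:ℝ) - 2/(n:ℝ)) * (C*p*X^(p-1) + ε)^(m-1)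
            * (C*p*((p-1)*X^(p-2))) ≤ (DD + γ/4) * (C*p*X^(p-1)) := by
          have hnn1 : (0:ℝ) ≤ (n:ℝ)^2 * s ^ ((2:ℝ) - 2/(n:ℝ)) * (C*p*(p-1)) :=
            mul_nonneg (mul_nonneg (by positivity) hsenn) hCpp
          have hnn2 : (0:ℝ) ≤ (p-1)*((1+1/κ)^(m-1))*((C*p)^(m-1))*(n:ℝ)^2 :=
            mul_nonneg (mul_nonneg (mul_nonneg (by linarith) hκnn) hCpm) (by positivity)
          have h14 := mul_le_mul_of_nonneg_left hseub hnn2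
          calc (n:ℝ)^2 * s ^ ((2:ℝ) - 2/(n:ℝ)) * (C*p*X^(p-1) + ε)^(m-1)
              * (C*p*((p-1)*X^(p-2)))
              = ((n:ℝ)^2 * s ^ ((2:ℝ) - 2/(n:ℝ)) * (C*p*(p-1)))
                * ((C*p*X^(p-1) + ε)^(m-1) * X^(p-2)) := by ring
            _ ≤ ((n:ℝ)^2 * s ^ ((2:ℝ) - 2/(n:ℝ)) * (C*p*(p-1)))
                * ((1+1/κ)^(m-1) * (C*p)^(m-1) * X^(p-1)) :=
                mul_le_mul_of_nonneg_left hW hnn1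
            _ ≤ ((n:ℝ)^2 * r₁^(2*n-2) * (p-1) * (1+1/κ)^(m-1) * (C*p)^(m-1))
                * (C*p*X^(p-1)) := by linarith [mul_le_mul_of_nonneg_right h14 hus0.le]
            _ = (1+1/κ)^(m-1) * DD * (C*p*X^(p-1)) := by
                rw [hDDdef, hpm]; field_simp
            _ ≤ (DD + γ/4) * (C*p*X^(p-1)) := mul_le_mul_of_nonneg_right hκD hus0.le
        have hCXp : C*X^p ≤ γ/8 := by
          have h15 : C*X^p ≤ C*(r₁^n - rmin^n)^p :=
            mul_le_mul_of_nonneg_left (Real.rpow_le_rpow hX0.le hXub hp0.le) hC0.le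
          linarith [hrβ]
        have hηub : -C*d^p + ε*κ*(a + d) ≤ γ/8 := by
          have h16 : (0:ℝ) ≤ C*d^p := mul_nonneg hC0.le (Real.rpow_nonneg hd0.le _)
          have h17 : ε*κ*(a+d) ≤ ε₀*κ*(a+a) :=
            mul_le_mul hekub (by linarith) (by linarith) (mul_nonneg hε₀0.le hκ0.le)
          linarith [h16, h17, hε₀κγ, mul_pos hε₀0 hκ0]
        constructor
        · have hfin1 : θ*(C*p*X^(p-1)) ≤ (γ/8)*(C*p*X^(p-1)) :=
            mul_le_mul_of_nonneg_right hθ.2 hus0.le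
          have hfin2 : μ*s*(C*p*X^(p-1)) ≤ μ*r₁^n*(C*p*X^(p-1)) :=
            mul_le_mul_of_nonneg_right (mul_le_mul_of_nonneg_left hsr₁ hμ.le) hus0.le
          have hfin3 : (μ*R^n - γ/4)*(C*p*X^(p-1)) ≤ (A - C*X^p)*(C*p*X^(p-1)) := by
            apply mul_le_mul_of_nonneg_right _ hus0.le
            rw [hAdef]
            linarith [hηub, hCXp]
          have hfin4 : ε*κ*(R^n - r₂^n)*(C*p*X^(p-1)) ≤ (γ/16)*(C*p*X^(p-1)) :=
            mul_le_mul_of_nonneg_right hslack hus0.le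
          have hγus : γ*(C*p*X^(p-1)) = (μ*R^n)*(C*p*X^(p-1)) - (μ*r₁^n)*(C*p*X^(p-1))
              - DD*(C*p*X^(p-1)) := by
            rw [hγdef, hadef]; ring
          linarith [hTb, hfin1, hfin2, hfin3, hfin4, hγus, mul_pos hγ0 hus0]
        · linarith [mul_nonneg (mul_nonneg hek0.le hv0) hus0.le]
end
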